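/- arXiv:1807.03626 — 8 statements merged into one kernel-verified Lean document; each statement's English description precedes it below -/
import Mathlib

section
/- Let M ⊆ H be a matching, let i_0 ∈ P be a player not occurring in any edge of M, and let A ⊆ H \ M be a finite set of addable edges whose resource sets are pairwise disjoint, such that every e ∈ A is blocked (B(e) ≠ ∅) and every edge of M intersects, in resources, the resource set of at most one edge of A. If the configuration LP at value τ is feasible, then there exists an edge (i, C) ∈ H \ M with i ∈ B_P ∪ {i_0} and C ∩ (A_R ∪ B_R) = ∅; that is, a new addable edge always exists. -/
/-!
Suppose no new addable edge exists. Then every configuration of a player of `B_P ∪ {i₀}` keeps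
value less than `t` outside `X = A_R ∪ B_R` (otherwise a minimal part of it would be a new
addable edge), so it has value at least `τ - t = 17t/6` inside `X`. Give each resource weight `1`
if its value is at least `t` (fat) and `min (2v/(5t)) (1/3)` otherwise (thin). A set of value
`17t/6` has weight at least `1`, so the LP constraints force `w(X) ≥ |B| + 1`. On the other hand
each addable edge, together with the `k` blocking edges meeting it, carries weight at most `k`,
whence `w(X) ≤ |B|`.
-/

namespace SantaClaus

open Finset

noncomputable def dualWeight (t a : ℝ) : ℝ :=
  if t ≤ a then 1 else min (2 * a / (5 * t)) (1 / 3)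

section dualWeight

variable {t a : ℝ}

lemma dualWeight_nonneg (ht : 0 < t) (ha : 0 ≤ a) : 0 ≤ dualWeight t a := by
  unfold dualWeight; split_ifs <;> positivity

lemma dualWeight_of_le (h : t ≤ a) : dualWeight t a = 1 := if_pos h

lemma dualWeight_of_lt (h : a < t) : dualWeight t a = min (2 * a / (5 * t)) (1 / 3) :=
  if_neg h.not_ge

lemma dualWeight_le_third (h : a < t) : dualWeight t a ≤ 1 / 3 :=
  (dualWeight_of_lt h).trans_le (min_le_right _ _)

lemma dualWeight_le_div (h : a < t) : dualWeight t a ≤ 2 * a / (5 * t) :=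
  (dualWeight_of_lt h).trans_le (min_le_left _ _)

lemma dualWeight_eq_third (ht : 0 < t) (h : 5 * t / 6 ≤ a) (h' : a < t) :
    dualWeight t a = 1 / 3 := by
  rw [dualWeight_of_lt h', min_eq_right]
  rw [le_div_iff₀ (by positivity)]
  linarith

lemma dualWeight_eq_div (ht : 0 < t) (h : a ≤ 5 * t / 6) : dualWeight t a = 2 * a / (5 * t) := by
  rw [dualWeight_of_lt (by linarith), min_eq_left]
  rw [div_le_iff₀ (by positivity)]
  linarith

end dualWeight

variable {R : Type*} {v : R → ℝ} {t : ℝ}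

noncomputable def weight (v : R → ℝ) (t : ℝ) (S : Finset R) : ℝ :=
  ∑ j ∈ S, dualWeight t (v j)

lemma weight_nonneg (hv : ∀ j, 0 ≤ v j) (ht : 0 < t) (S : Finset R) : 0 ≤ weight v t S :=
  sum_nonneg fun j _ => dualWeight_nonneg ht (hv j)

lemma weight_mono (hv : ∀ j, 0 ≤ v j) (ht : 0 < t) {S T : Finset R} (h : S ⊆ T) :
    weight v t S ≤ weight v t T :=
  sum_le_sum_of_subset_of_nonneg h fun j _ _ => dualWeight_nonneg ht (hv j)

lemma weight_union_le [DecidableEq R] (hv : ∀ j, 0 ≤ v j) (ht : 0 < t) (S T : Finset R) :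
    weight v t (S ∪ T) ≤ weight v t S + weight v t T := by
  have hinter := weight_nonneg hv ht (S ∩ T)
  have := sum_union_inter (s₁ := S) (s₂ := T) (f := fun j => dualWeight t (v j))
  unfold weight at *
  linarith

lemma weight_biUnion_le [DecidableEq R] (hv : ∀ j, 0 ≤ v j) (ht : 0 < t) {ι : Type*} (s : Finset ι)
    (f : ι → Finset R) : weight v t (s.biUnion f) ≤ ∑ i ∈ s, weight v t (f i) :=
  sup_eq_biUnion s f ▸ apply_sup_le_sum (f := weight v t) sum_empty
    (weight_union_le hv ht _ _) s

lemma weight_singleton_of_le {j : R} (h : t ≤ v j) : weight v t {j} = 1 := by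
  simp [weight, dualWeight_of_le h]

lemma weight_le_card_div_three {S : Finset R} (hS : ∀ j ∈ S, v j < t) :
    weight v t S ≤ #S / 3 := by
  calc weight v t S ≤ ∑ _j ∈ S, (1 / 3 : ℝ) :=
        sum_le_sum fun j hj => dualWeight_le_third (hS j hj)
    _ = #S / 3 := by rw [sum_const, nsmul_eq_mul]; ring

lemma weight_le_div {S : Finset R} (hS : ∀ j ∈ S, v j < t) :
    weight v t S ≤ 2 * (∑ j ∈ S, v j) / (5 * t) := by
  calc weight v t S ≤ ∑ j ∈ S, 2 * v j / (5 * t) :=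
        sum_le_sum fun j hj => dualWeight_le_div (hS j hj)
    _ = 2 * (∑ j ∈ S, v j) / (5 * t) := by rw [mul_sum, sum_div]

lemma weight_eq_div (ht : 0 < t) {S : Finset R} (hS : ∀ j ∈ S, v j ≤ 5 * t / 6) :
    weight v t S = 2 * (∑ j ∈ S, v j) / (5 * t) := by
  rw [weight, sum_congr rfl fun j hj => dualWeight_eq_div ht (hS j hj), mul_sum, sum_div]

lemma weight_eq_card_div_three (ht : 0 < t) {S : Finset R}
    (hS : ∀ j ∈ S, 5 * t / 6 ≤ v j ∧ v j < t) : weight v t S = #S / 3 := by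
  rw [weight, sum_congr rfl fun j hj => dualWeight_eq_third ht (hS j hj).1 (hS j hj).2]
  rw [sum_const, nsmul_eq_mul]; ring

/-- `17t/6 = τ - t` for `τ = 23t/6`: this is where `α = 23/6` comes from. -/
lemma one_le_weight (hv : ∀ j, 0 ≤ v j) (ht : 0 < t) {S : Finset R}
    (hS : 17 * t / 6 ≤ ∑ j ∈ S, v j) : 1 ≤ weight v t S := by
  by_cases! hfat : ∃ j ∈ S, t ≤ v j
  · obtain ⟨j, hj, hjt⟩ := hfat
    rw [← weight_singleton_of_le hjt]
    exact weight_mono hv ht (singleton_subset_iff.mpr hj)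
  set H := S.filter (fun j => 5 * t / 6 ≤ v j)
  set L := S.filter (fun j => ¬ 5 * t / 6 ≤ v j)
  have hH : weight v t H = #H / 3 := weight_eq_card_div_three ht fun j hj => by
    rw [mem_filter] at hj; exact ⟨hj.2, hfat j hj.1⟩
  rcases le_or_gt 3 #H with h3 | h2
  · have : (3 : ℝ) ≤ #H := by exact_mod_cast h3
    have := weight_mono hv ht (filter_subset (fun j => 5 * t / 6 ≤ v j) S)
    linarith
  have hL : weight v t L = 2 * (∑ j ∈ L, v j) / (5 * t) := weight_eq_div ht fun j hj => by
    rw [mem_filter] at hj; linarith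
  have hvH : ∑ j ∈ H, v j ≤ #H * t := by
    simpa using sum_le_sum fun j (hj : j ∈ H) => (hfat j (mem_filter.mp hj).1).le
  have hH2 : (#H : ℝ) ≤ 2 := by exact_mod_cast Nat.lt_succ_iff.mp h2
  have hsplit := sum_filter_add_sum_filter_not S (fun j => 5 * t / 6 ≤ v j) v
  have hwsplit := sum_filter_add_sum_filter_not S (fun j => 5 * t / 6 ≤ v j) (dualWeight t ∘ v)
  change weight v t H + weight v t L = weight v t S at hwsplit
  rw [← hwsplit, hH, hL, div_add_div _ _ (by norm_num) (by positivity), le_div_iff₀ (by positivity)]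
  nlinarith

def IsMinimalFor (v : R → ℝ) (t : ℝ) (S : Finset R) : Prop :=
  t ≤ ∑ j ∈ S, v j ∧ ∀ S' ⊂ S, ∑ j ∈ S', v j < t

lemma exists_isMinimalFor_subset {C : Finset R} (hC : t ≤ ∑ j ∈ C, v j) :
    ∃ C' ⊆ C, IsMinimalFor v t C' := by
  induction C using Finset.strongInduction with
  | _ C ih =>
    by_cases! h : ∀ S' ⊂ C, ∑ j ∈ S', v j < t
    · exact ⟨C, Subset.refl C, hC, h⟩
    · obtain ⟨S', hS'C, hS'⟩ := h
      obtain ⟨C', hC'S', hC'⟩ := ih S' hS'C hS'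
      exact ⟨C', hC'S'.trans hS'C.subset, hC'⟩

namespace IsMinimalFor

variable {S : Finset R}

lemma nonempty (hS : IsMinimalFor v t S) (ht : 0 < t) : S.Nonempty := by
  rw [nonempty_iff_ne_empty]
  rintro rfl
  simpa using ht.trans_le hS.1

lemma eq_singleton (hS : IsMinimalFor v t S) {j : R} (hj : j ∈ S) (hjt : t ≤ v j) : S = {j} := by
  by_contra hne
  have := hS.2 {j} (Finset.ssubset_iff_subset_ne.mpr ⟨singleton_subset_iff.mpr hj, Ne.symm hne⟩)
  simp only [sum_singleton] at this
  linarith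

variable [DecidableEq R]

lemma sum_sdiff_lt (hS : IsMinimalFor v t S) {T : Finset R} (hST : (S ∩ T).Nonempty) :
    ∑ j ∈ S \ T, v j < t := by
  obtain ⟨q, hq⟩ := hST
  rw [mem_inter] at hq
  exact hS.2 _ <|
    (ssubset_iff_of_subset sdiff_subset).mpr ⟨q, hq.1, fun h => (mem_sdiff.mp h).2 hq.2⟩

lemma sum_lt_add (hS : IsMinimalFor v t S) {j : R} (hj : j ∈ S) : ∑ i ∈ S, v i < t + v j := by
  have := hS.sum_sdiff_lt (T := {j}) ⟨j, by simp [hj]⟩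
  rw [sum_sdiff_eq_sub (singleton_subset_iff.mpr hj), sum_singleton] at this
  linarith

lemma add_lt (hS : IsMinimalFor v t S) (h3 : 3 ≤ #S) {j₁ j₂ : R} (hj₁ : j₁ ∈ S) (hj₂ : j₂ ∈ S)
    (hne : j₁ ≠ j₂) : v j₁ + v j₂ < t := by
  have hsub : {j₁, j₂} ⊂ S := by
    refine Finset.ssubset_iff_subset_ne.mpr ⟨insert_subset hj₁ (singleton_subset_iff.mpr hj₂), ?_⟩
    rintro rfl
    have := card_insert_le j₁ {j₂}
    simp only [card_singleton] at this h3
    omega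
  simpa [sum_pair hne] using hS.2 _ hsub

lemma weight_lt_three_fifths (hS : IsMinimalFor v t S) (ht : 0 < t) (hthin : ∀ j ∈ S, v j < t)
    (h3 : 3 ≤ #S) : weight v t S < 3 / 5 := by
  obtain ⟨j₁, hj₁, j₂, hj₂, hne⟩ := one_lt_card.mp (by omega : 1 < #S)
  have h₁ := hS.sum_lt_add hj₁
  have h₂ := hS.sum_lt_add hj₂
  have h₁₂ := hS.add_lt h3 hj₁ hj₂ hne
  calc weight v t S ≤ 2 * (∑ j ∈ S, v j) / (5 * t) := weight_le_div hthin
    _ < 3 / 5 := by rw [div_lt_iff₀ (by positivity)]; linarith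

lemma weight_le_two_thirds (hS : IsMinimalFor v t S) (ht : 0 < t) (hthin : ∀ j ∈ S, v j < t) :
    weight v t S ≤ 2 / 3 := by
  rcases le_or_gt #S 2 with h2 | h3
  · have : (#S : ℝ) ≤ 2 := by exact_mod_cast h2
    linarith [weight_le_card_div_three hthin]
  · linarith [hS.weight_lt_three_fifths ht hthin h3]

lemma two_thirds_lt_of_three_fifths_lt_weight (hS : IsMinimalFor v t S) (ht : 0 < t)
    (hthin : ∀ j ∈ S, v j < t) (hw : 3 / 5 < weight v t S) {q : R} (hq : q ∈ S) :
    2 * t / 3 < v q := by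
  have h2 : #S ≤ 2 := by
    by_contra! h3
    linarith [hS.weight_lt_three_fifths ht hthin h3]
  have hrest : weight v t (S.erase q) ≤ 1 / 3 := by
    have : (#(S.erase q) : ℝ) ≤ 1 := by
      rw [card_erase_of_mem hq]; exact_mod_cast (by omega : #S - 1 ≤ 1)
    linarith [weight_le_card_div_three (S := S.erase q) fun j hj => hthin j (mem_of_mem_erase hj)]
  have hsplit : dualWeight t (v q) + weight v t (S.erase q) = weight v t S :=
    add_sum_erase S (fun j => dualWeight t (v j)) hq
  have hq' : 4 / 15 < 2 * v q / (5 * t) := by linarith [dualWeight_le_div (hthin q hq)]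
  rw [lt_div_iff₀ (by positivity)] at hq'
  linarith

lemma weight_sdiff_lt (hS : IsMinimalFor v t S) (ht : 0 < t) (hthin : ∀ j ∈ S, v j < t)
    {T : Finset R} (hST : (S ∩ T).Nonempty) : weight v t (S \ T) < 2 / 5 := by
  have := hS.sum_sdiff_lt hST
  calc weight v t (S \ T) ≤ 2 * (∑ j ∈ S \ T, v j) / (5 * t) :=
        weight_le_div fun j hj => hthin j (mem_sdiff.mp hj).1
    _ < 2 / 5 := by rw [div_lt_iff₀ (by positivity)]; linarith

end IsMinimalFor

lemma weight_sdiff_add_weight_le_one (hv : ∀ j, 0 ≤ v j) (ht : 0 < t) [DecidableEq R]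
    {E E' : Finset R} (hE : IsMinimalFor v t E) (hEthin : ∀ j ∈ E, v j < t)
    (hE' : IsMinimalFor v t E') (hE'thin : ∀ j ∈ E', v j < t) (hEE' : (E ∩ E').Nonempty) :
    weight v t (E \ E') + weight v t E' ≤ 1 := by
  have hE'w := hE'.weight_le_two_thirds ht hE'thin
  rcases le_or_gt (weight v t E') (3 / 5) with hsmall | hbig
  · linarith [hE.weight_sdiff_lt ht hEthin hEE']
  obtain ⟨q, hq⟩ := hEE'
  rw [mem_inter] at hq
  have hvq := hE'.two_thirds_lt_of_three_fifths_lt_weight ht hE'thin hbig hq.2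
  have hres_thin : ∀ j ∈ E \ E', v j < t := fun j hj => hEthin j (mem_sdiff.mp hj).1
  rcases le_or_gt #(E \ E') 1 with h1 | h2
  · have : (#(E \ E') : ℝ) ≤ 1 := by exact_mod_cast h1
    linarith [weight_le_card_div_three hres_thin]
  -- Otherwise `E` has at least three resources, so all but `q` are worth less than `t/3`.
  have hqres : q ∉ E \ E' := fun h => (mem_sdiff.mp h).2 hq.2
  have h3 : 3 ≤ #E := by
    have := card_le_card (insert_subset hq.1 sdiff_subset : insert q (E \ E') ⊆ E)
    rw [card_insert_of_notMem hqres] at this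
    omega
  obtain ⟨j₀, hj₀⟩ := card_pos.mp (by omega : 0 < #(E \ E'))
  have hpair := hE.add_lt h3 (mem_sdiff.mp hj₀).1 hq.1 (ne_of_mem_of_not_mem hj₀ hqres)
  have hsum := hE.sum_lt_add (mem_sdiff.mp hj₀).1
  have hres : ∑ j ∈ E \ E', v j ≤ ∑ j ∈ E, v j - v q := by
    rw [← sum_erase_eq_sub hq.1]
    refine sum_le_sum_of_subset_of_nonneg (fun j hj => ?_) fun j _ _ => hv j
    exact mem_erase.mpr ⟨ne_of_mem_of_not_mem hj hqres, (mem_sdiff.mp hj).1⟩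
  have : weight v t (E \ E') < 4 / 15 :=
    calc weight v t (E \ E') ≤ 2 * (∑ j ∈ E \ E', v j) / (5 * t) := weight_le_div hres_thin
      _ < 4 / 15 := by rw [div_lt_iff₀ (by positivity)]; linarith
  linarith

lemma weight_sdiff_add_sum_weight_le_card_of_thin (hv : ∀ j, 0 ≤ v j) (ht : 0 < t)
    [DecidableEq R] {E : Finset R} (hE : IsMinimalFor v t E) (hEthin : ∀ j ∈ E, v j < t)
    {ι : Type*} {G : Finset ι} (hG : G.Nonempty) {f : ι → Finset R}
    (hf : ∀ k ∈ G, IsMinimalFor v t (f k)) (hfthin : ∀ k ∈ G, ∀ j ∈ f k, v j < t)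
    (hmeet : ∀ k ∈ G, (f k ∩ E).Nonempty) {U : Finset R} (hU : ∀ k ∈ G, f k ⊆ U) :
    weight v t (E \ U) + ∑ k ∈ G, weight v t (f k) ≤ #G := by
  rcases hG.exists_eq_singleton_or_nontrivial with ⟨k, rfl⟩ | hG2
  · have hk := mem_singleton_self k
    have hmono := weight_mono hv ht (sdiff_subset_sdiff (le_refl E) (hU k hk))
    have := weight_sdiff_add_weight_le_one hv ht hE hEthin (hf k hk) (hfthin k hk)
      (inter_comm (f k) E ▸ hmeet k hk)
    simp only [sum_singleton, card_singleton, Nat.cast_one]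
    linarith
  obtain ⟨k, hk⟩ := hG
  have hEU : (E ∩ U).Nonempty :=
    ((inter_comm (f k) E ▸ hmeet k hk)).mono (inter_subset_inter_left (hU k hk))
  have hres := hE.weight_sdiff_lt ht hEthin hEU
  have hsum : ∑ k ∈ G, weight v t (f k) ≤ #G * (2 / 3) := by
    simpa using sum_le_sum fun k hk => (hf k hk).weight_le_two_thirds ht (hfthin k hk)
  have : (2 : ℝ) ≤ #G := by exact_mod_cast one_lt_card_iff_nontrivial.mpr hG2
  linarith

lemma weight_sdiff_add_sum_weight_le_card (hv : ∀ j, 0 ≤ v j) (ht : 0 < t) [DecidableEq R]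
    {E : Finset R} (hE : IsMinimalFor v t E) {ι : Type*} {G : Finset ι} (hG : G.Nonempty)
    {f : ι → Finset R} (hf : ∀ k ∈ G, IsMinimalFor v t (f k))
    (hmeet : ∀ k ∈ G, (f k ∩ E).Nonempty) {U : Finset R} (hU : ∀ k ∈ G, f k ⊆ U) :
    weight v t (E \ U) + ∑ k ∈ G, weight v t (f k) ≤ #G := by
  by_cases! hfat : ∃ j ∈ E, t ≤ v j
  · obtain ⟨j, hj, hjt⟩ := hfat
    obtain rfl := hE.eq_singleton hj hjt
    have hfj : ∀ k ∈ G, f k = {j} := fun k hk => by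
      obtain ⟨i, hi⟩ := hmeet k hk
      obtain ⟨hik, rfl⟩ : i ∈ f k ∧ i = j := by simpa using hi
      exact (hf k hk).eq_singleton hik hjt
    obtain ⟨k, hk⟩ := hG
    have hjU : j ∈ U := hU k hk (by simp [hfj k hk])
    rw [sdiff_eq_empty_iff_subset.mpr (singleton_subset_iff.mpr hjU),
      sum_congr rfl fun k hk => by rw [hfj k hk, weight_singleton_of_le hjt]]
    simp [weight]
  refine weight_sdiff_add_sum_weight_le_card_of_thin hv ht hE hfat hG hf ?_ hmeet hU
  intro k hk j hj
  by_contra! hjt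
  obtain ⟨i, hi⟩ := hmeet k hk
  obtain ⟨hik, hiE⟩ := mem_inter.mp hi
  rw [(hf k hk).eq_singleton hj hjt, mem_singleton] at hik
  exact (hfat i hiE).not_ge (hik ▸ hjt)

/-- Each blocking edge meets exactly one addable edge, so grouping the blocking edges by the
addable edge they meet lets the per-group bound be summed. -/
lemma weight_biUnion_union_biUnion_le_card (hv : ∀ j, 0 ≤ v j) (ht : 0 < t) [DecidableEq R]
    {ι : Type*} [DecidableEq ι] {A B : Finset ι} {f : ι → Finset R}
    (hA : ∀ a ∈ A, IsMinimalFor v t (f a)) (hB : ∀ b ∈ B, IsMinimalFor v t (f b))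
    (hblocked : ∀ a ∈ A, ∃ b ∈ B, (f b ∩ f a).Nonempty)
    (hblocking : ∀ b ∈ B, ∃ a ∈ A, (f b ∩ f a).Nonempty)
    (hone : ∀ b ∈ B, ∀ a₁ ∈ A, ∀ a₂ ∈ A,
      (f b ∩ f a₁).Nonempty → (f b ∩ f a₂).Nonempty → a₁ = a₂) :
    weight v t (A.biUnion f ∪ B.biUnion f) ≤ #B := by
  set U := B.biUnion f
  set g : ι → Finset ι := fun a => B.filter fun b => (f b ∩ f a).Nonempty
  have hg : (A : Set ι).PairwiseDisjoint g := fun a₁ h₁ a₂ h₂ hne =>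
    disjoint_left.mpr fun b hb₁ hb₂ => hne <|
      hone b (mem_filter.mp hb₁).1 a₁ h₁ a₂ h₂ (mem_filter.mp hb₁).2 (mem_filter.mp hb₂).2
  have hBg : B = A.biUnion g := by
    ext b
    simp only [mem_biUnion, mem_filter, g]
    exact ⟨fun hb => (hblocking b hb).imp fun a ha => ⟨ha.1, hb, ha.2⟩,
      fun ⟨_, _, hb, _⟩ => hb⟩
  have hcover : A.biUnion f ∪ U ⊆ A.biUnion (fun a => f a \ U) ∪ U := by
    intro j
    by_cases j ∈ U <;> simp_all
  have hgroup : ∀ a ∈ A, weight v t (f a \ U) + ∑ b ∈ g a, weight v t (f b) ≤ #(g a) :=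
    fun a ha => weight_sdiff_add_sum_weight_le_card hv ht (hA a ha)
      (filter_nonempty_iff.mpr (hblocked a ha)) (fun b hb => hB b (mem_filter.mp hb).1)
      (fun b hb => (mem_filter.mp hb).2) (fun b hb => subset_biUnion_of_mem f (mem_filter.mp hb).1)
  calc weight v t (A.biUnion f ∪ U)
      ≤ weight v t (A.biUnion (fun a => f a \ U)) + weight v t U :=
        (weight_mono hv ht hcover).trans (weight_union_le hv ht _ _)
    _ ≤ ∑ a ∈ A, weight v t (f a \ U) + ∑ b ∈ B, weight v t (f b) :=
        add_le_add (weight_biUnion_le hv ht _ _) (weight_biUnion_le hv ht _ _)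
    _ = ∑ a ∈ A, (weight v t (f a \ U) + ∑ b ∈ g a, weight v t (f b)) := by
        rw [sum_add_distrib, ← sum_biUnion hg, ← hBg]
    _ ≤ ∑ a ∈ A, (#(g a) : ℝ) := sum_le_sum hgroup
    _ = #B := by rw [hBg, card_biUnion hg, Nat.cast_sum]

/-- Weak duality for the configuration LP. -/
lemma card_le_sum_of_feasible {P : Type*} [Fintype P] [Fintype R] [DecidableEq R]
    {x : P → Finset R → ℝ} (hx : ∀ i C, 0 ≤ x i C)
    (hcap : ∀ j : R, ∑ i : P, ∑ C ∈ univ.filter (fun C : Finset R => j ∈ C), x i C ≤ 1)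
    {S : Finset P} (hcov : ∀ i ∈ S, 1 ≤ ∑ C : Finset R, x i C) {w : R → ℝ} (hw : ∀ j, 0 ≤ w j)
    {X : Finset R} (hpay : ∀ i ∈ S, ∀ C, x i C ≠ 0 → 1 ≤ ∑ j ∈ C ∩ X, w j) :
    (#S : ℝ) ≤ ∑ j ∈ X, w j := by
  have hload : ∀ j, ∑ i ∈ S, ∑ C ∈ univ.filter (fun C : Finset R => j ∈ C), x i C ≤ 1 :=
    fun j => (sum_le_sum_of_subset_of_nonneg (subset_univ S)
      fun i _ _ => sum_nonneg fun C _ => hx i C).trans (hcap j)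
  calc (#S : ℝ) = ∑ i ∈ S, 1 := by simp
    _ ≤ ∑ i ∈ S, ∑ C, x i C := sum_le_sum hcov
    _ ≤ ∑ i ∈ S, ∑ C, x i C * ∑ j ∈ C ∩ X, w j := by
        refine sum_le_sum fun i hi => sum_le_sum fun C _ => ?_
        by_cases hxC : x i C = 0
        · simp [hxC]
        · exact le_mul_of_one_le_right (hx i C) (hpay i hi C hxC)
    _ = ∑ j ∈ X, w j * ∑ i ∈ S, ∑ C ∈ univ.filter (fun C : Finset R => j ∈ C), x i C := by
        simp only [mul_sum, sum_filter, inter_comm _ X, ← filter_mem_eq_inter (s := X), mul_ite,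
          mul_zero]
        simp only [mul_comm (x _ _)]
        conv_rhs => rw [sum_comm]
        exact sum_congr rfl fun i _ => sum_comm
    _ ≤ ∑ j ∈ X, w j := sum_le_sum fun j _ => mul_le_of_le_one_right (hw j) (hload j)

section Matching

variable {P : Type*} [DecidableEq P]

lemma card_insert_image_fst {M B : Finset (P × Finset R)} {i₀ : P}
    (hM : ∀ e₁ ∈ M, ∀ e₂ ∈ M, e₁.1 = e₂.1 → e₁ = e₂) (hi₀ : ∀ e ∈ M, e.1 ≠ i₀) (hBM : B ⊆ M) :
    #(insert i₀ (B.image Prod.fst)) = #B + 1 := by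
  rw [card_insert_of_notMem, card_image_of_injOn fun e₁ h₁ e₂ h₂ => hM e₁ (hBM h₁) e₂ (hBM h₂)]
  rw [mem_image]
  rintro ⟨e, he, hei₀⟩
  exact hi₀ e (hBM he) hei₀

lemma pair_notMem_of_disjoint {M B : Finset (P × Finset R)} {i₀ i : P} {C X : Finset R}
    (hM : ∀ e₁ ∈ M, ∀ e₂ ∈ M, e₁.1 = e₂.1 → e₁ = e₂) (hi₀ : ∀ e ∈ M, e.1 ≠ i₀) (hBM : B ⊆ M)
    (hBX : ∀ e ∈ B, e.2 ⊆ X) (hi : i ∈ insert i₀ (B.image Prod.fst)) (hC : C.Nonempty)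
    (hCX : Disjoint C X) : (i, C) ∉ M := by
  intro hiC
  rw [mem_insert, mem_image] at hi
  rcases hi with rfl | ⟨e, heB, rfl⟩
  · exact hi₀ _ hiC rfl
  · have hCe : C = e.2 := congrArg Prod.snd (hM _ hiC e (hBM heB) rfl)
    exact hC.ne_empty (disjoint_self.mp (hCX.mono_right (hCe ▸ hBX e heB)))

end Matching

end SantaClaus

open SantaClaus Finset in
theorem santa_claus_addable_edge_exists_general
    {P R : Type*} [Fintype P] [Fintype R] [DecidableEq P] [DecidableEq R]
    (v : R → ℝ) (hv : ∀ j, 0 < v j) (Rof : P → Finset R)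
    (τ : ℝ) (hτ : 0 < τ)
    (M A : Finset (P × Finset R)) (i₀ : P)
    -- `M ⊆ H` : every edge of `M` is a hyperedge
    (hM_edge : ∀ e ∈ M, e.2 ⊆ Rof e.1 ∧
      τ / (23 / 6) ≤ ∑ j ∈ e.2, v j ∧
      ∀ C' ⊂ e.2, ∑ j ∈ C', v j < τ / (23 / 6))
    -- `M` is a matching
    (hM_match : ∀ e₁ ∈ M, ∀ e₂ ∈ M, e₁ ≠ e₂ →
      e₁.1 ≠ e₂.1 ∧ Disjoint e₁.2 e₂.2)
    -- `i₀` does not occur in any edge of `M`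
    (hi₀ : ∀ e ∈ M, e.1 ≠ i₀)
    -- `A ⊆ H \ M`
    (hA_edge : ∀ e ∈ A, (e.2 ⊆ Rof e.1 ∧
      τ / (23 / 6) ≤ ∑ j ∈ e.2, v j ∧
      ∀ C' ⊂ e.2, ∑ j ∈ C', v j < τ / (23 / 6)) ∧ e ∉ M)
    -- every `e ∈ A` is blocked: `B(e) ≠ ∅`
    (hblocked : ∀ e ∈ A, ∃ e' ∈ M, (e'.2 ∩ e.2).Nonempty)
    -- every edge of `M` meets the resources of at most one edge of `A`
    (hone : ∀ e' ∈ M, ∀ e₁ ∈ A, ∀ e₂ ∈ A,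
      (e'.2 ∩ e₁.2).Nonempty → (e'.2 ∩ e₂.2).Nonempty → e₁ = e₂)
    -- the configuration LP at value `τ` is feasible
    (hfeas : ∃ x : P → Finset R → ℝ,
        (∀ i C, 0 ≤ x i C) ∧
        (∀ i C, ¬ (C ⊆ Rof i ∧ τ ≤ ∑ j ∈ C, v j) → x i C = 0) ∧
        (∀ i : P, 1 ≤ ∑ C : Finset R, x i C) ∧
        (∀ j : R, ∑ i : P, ∑ C ∈ Finset.univ.filter (fun C : Finset R => j ∈ C),
          x i C ≤ 1)) :
    ∃ (i : P) (C : Finset R),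
      -- `(i, C)` is a hyperedge not in `M`
      C ⊆ Rof i ∧
      τ / (23 / 6) ≤ ∑ j ∈ C, v j ∧
      (∀ C' ⊂ C, ∑ j ∈ C', v j < τ / (23 / 6)) ∧
      (i, C) ∉ M ∧
      -- `i ∈ B_P ∪ {i₀}`
      (i = i₀ ∨ ∃ e' ∈ M, (∃ e ∈ A, (e'.2 ∩ e.2).Nonempty) ∧ e'.1 = i) ∧
      -- `C ∩ A_R = ∅`
      (∀ e ∈ A, Disjoint C e.2) ∧
      -- `C ∩ B_R = ∅`
      (∀ e' ∈ M, (∃ e ∈ A, (e'.2 ∩ e.2).Nonempty) → Disjoint C e'.2) := by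
  obtain ⟨x, hx, hx_supp, hx_cov, hx_cap⟩ := hfeas
  set t := τ / (23 / 6) with ht_def
  have ht : 0 < t := by positivity
  have hv₀ : ∀ j, 0 ≤ v j := fun j => (hv j).le
  have hM_inj : ∀ e₁ ∈ M, ∀ e₂ ∈ M, e₁.1 = e₂.1 → e₁ = e₂ := fun e₁ h₁ e₂ h₂ h =>
    by_contra fun hne => (hM_match e₁ h₁ e₂ h₂ hne).1 h
  set B := M.filter fun e' => ∃ e ∈ A, (e'.2 ∩ e.2).Nonempty
  set X := A.biUnion Prod.snd ∪ B.biUnion Prod.snd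
  set S := insert i₀ (B.image Prod.fst)
  have hBX : ∀ e ∈ B, e.2 ⊆ X := fun e he =>
    (subset_biUnion_of_mem Prod.snd he).trans subset_union_right
  by_contra hno
  have hsmall : ∀ i ∈ S, ∀ C ⊆ Rof i, ∑ j ∈ C \ X, v j < t := by
    intro i hi C hC
    by_contra! hCX
    obtain ⟨C', hC'C, hC'⟩ := exists_isMinimalFor_subset hCX
    have hdisj : Disjoint C' X := disjoint_of_subset_left hC'C sdiff_disjoint
    refine hno ⟨i, C', hC'C.trans (sdiff_subset.trans hC), hC'.1, hC'.2,
      pair_notMem_of_disjoint hM_inj hi₀ (filter_subset _ M) hBX hi (hC'.nonempty ht) hdisj, ?_,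
      fun e he => hdisj.mono_right ((subset_biUnion_of_mem Prod.snd he).trans subset_union_left),
      fun e' he' hmeet => hdisj.mono_right (hBX e' (mem_filter.mpr ⟨he', hmeet⟩))⟩
    rw [mem_insert, mem_image] at hi
    exact hi.imp_right fun ⟨e, he, hei⟩ => ⟨e, (mem_filter.mp he).1, (mem_filter.mp he).2, hei⟩
  have hpay : ∀ i ∈ S, ∀ C, x i C ≠ 0 → 1 ≤ weight v t (C ∩ X) := by
    intro i hi C hxC
    obtain ⟨hCR, hCτ⟩ := not_not.mp (mt (hx_supp i C) hxC)
    have := sum_inter_add_sum_sdiff C X v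
    exact one_le_weight hv₀ ht (by linarith [hsmall i hi C hCR])
  have hbudget : weight v t X ≤ #B :=
    weight_biUnion_union_biUnion_le_card hv₀ ht (fun e he => (hA_edge e he).1.2)
      (fun e he => (hM_edge e (mem_filter.mp he).1).2)
      (fun e he => (hblocked e he).imp fun e' he' => ⟨mem_filter.mpr ⟨he'.1, e, he, he'.2⟩, he'.2⟩)
      (fun e' he' => (mem_filter.mp he').2) (fun e' he' => hone e' (mem_filter.mp he').1)
  have hS : (#S : ℝ) ≤ weight v t X :=
    card_le_sum_of_feasible hx hx_cap (fun i _ => hx_cov i) (fun j => dualWeight_nonneg ht (hv₀ j))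
      hpay
  rw [card_insert_image_fst hM_inj hi₀ (filter_subset _ M)] at hS
  push_cast at hS
  linarith

/-- Let `α = 23/6` and `t = τ/α`.  Hyperedges are pairs `(i, C)` with `i ∈ P` and
`C ⊆ Rof i` minimal for threshold `t` (i.e. `∑ j ∈ C, v j ≥ t` and every
proper subset has value `< t`).  Let `M` be a matching (distinct players,
pairwise disjoint resource sets), `i₀` a player not occurring in `M`, and `A`
a set of addable edges (edges not in `M`) with pairwise disjoint resource
sets, such that every `e ∈ A` is blocked (some edge of `M` meets its resource
set) and every edge of `M` meets the resource set of at most one edge of `A`.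
The blocking edges are `B = {e' ∈ M : ∃ e ∈ A, e'.2 ∩ e.2 ≠ ∅}`.

If the configuration LP at value `τ` is feasible, then there exists an edge
`(i, C)` of the hypergraph, not in `M`, with `i ∈ B_P ∪ {i₀}` and
`C ∩ (A_R ∪ B_R) = ∅`; that is, a new addable edge always exists. -/
theorem santa_claus_addable_edge_exists
    {P R : Type*} [Fintype P] [Fintype R] [DecidableEq P] [DecidableEq R]
    (v : R → ℝ) (hv : ∀ j, 0 < v j) (Rof : P → Finset R)
    (τ : ℝ) (hτ : 0 < τ)
    (M A : Finset (P × Finset R)) (i₀ : P)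
    -- `M ⊆ H` : every edge of `M` is a hyperedge
    (hM_edge : ∀ e ∈ M, e.2 ⊆ Rof e.1 ∧
      τ / (23 / 6) ≤ ∑ j ∈ e.2, v j ∧
      ∀ C' ⊂ e.2, ∑ j ∈ C', v j < τ / (23 / 6))
    -- `M` is a matching
    (hM_match : ∀ e₁ ∈ M, ∀ e₂ ∈ M, e₁ ≠ e₂ →
      e₁.1 ≠ e₂.1 ∧ Disjoint e₁.2 e₂.2)
    -- `i₀` does not occur in any edge of `M`
    (hi₀ : ∀ e ∈ M, e.1 ≠ i₀)
    -- `A ⊆ H \ M`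
    (hA_edge : ∀ e ∈ A, (e.2 ⊆ Rof e.1 ∧
      τ / (23 / 6) ≤ ∑ j ∈ e.2, v j ∧
      ∀ C' ⊂ e.2, ∑ j ∈ C', v j < τ / (23 / 6)) ∧ e ∉ M)
    -- the resource sets of the edges of `A` are pairwise disjoint
    (hA_disj : ∀ e₁ ∈ A, ∀ e₂ ∈ A, e₁ ≠ e₂ → Disjoint e₁.2 e₂.2)
    -- every `e ∈ A` is blocked: `B(e) ≠ ∅`
    (hblocked : ∀ e ∈ A, ∃ e' ∈ M, (e'.2 ∩ e.2).Nonempty)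
    -- every edge of `M` meets the resources of at most one edge of `A`
    (hone : ∀ e' ∈ M, ∀ e₁ ∈ A, ∀ e₂ ∈ A,
      (e'.2 ∩ e₁.2).Nonempty → (e'.2 ∩ e₂.2).Nonempty → e₁ = e₂)
    -- the configuration LP at value `τ` is feasible
    (hfeas : ∃ x : P → Finset R → ℝ,
        (∀ i C, 0 ≤ x i C) ∧
        (∀ i C, ¬ (C ⊆ Rof i ∧ τ ≤ ∑ j ∈ C, v j) → x i C = 0) ∧
        (∀ i : P, 1 ≤ ∑ C : Finset R, x i C) ∧
        (∀ j : R, ∑ i : P, ∑ C ∈ Finset.univ.filter (fun C : Finset R => j ∈ C),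
          x i C ≤ 1)) :
    ∃ (i : P) (C : Finset R),
      -- `(i, C)` is a hyperedge not in `M`
      C ⊆ Rof i ∧
      τ / (23 / 6) ≤ ∑ j ∈ C, v j ∧
      (∀ C' ⊂ C, ∑ j ∈ C', v j < τ / (23 / 6)) ∧
      (i, C) ∉ M ∧
      -- `i ∈ B_P ∪ {i₀}`
      (i = i₀ ∨ ∃ e' ∈ M, (∃ e ∈ A, (e'.2 ∩ e.2).Nonempty) ∧ e'.1 = i) ∧
      -- `C ∩ A_R = ∅`
      (∀ e ∈ A, Disjoint C e.2) ∧
      -- `C ∩ B_R = ∅`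
      (∀ e' ∈ M, (∃ e ∈ A, (e'.2 ∩ e.2).Nonempty) → Disjoint C e'.2) :=
  santa_claus_addable_edge_exists_general v hv Rof τ hτ M A i₀ hM_edge hM_match hi₀ hA_edge hblocked
    hone hfeas
end

section
/- Let α = 23/6, β = 23/15, and T > 0. Let C be a finite set of resources with v(C) ≥ T, and let D be a set of resources with v(C \ D) < T/α. Define z_j = 1 if j ∈ D and v_j ≥ T/α; z_j = min{1/3, β·v_j/T} if j ∈ D and v_j < T/α; and z_j = 0 if j ∉ D. Then ∑_{j∈C} z_j ≥ 1. -/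
/-!
Let `E = C ∩ D`; it carries value more than `17T/23`. One resource of `E` of value at least
`6T/23` already has `z = 1`. Otherwise every `j ∈ E` satisfies `15T z_j ≥ 23 v_j - T`, with the
loss `T` only for the resources of value at least `5T/23`, where `z_j = 1/3`. Three of those
give `1`; with at most two, `15T ∑ z ≥ 23 v(E) - 2T > 15T`.
-/

section SmallResources

variable {ι : Type*} {T v : ℝ}

lemma sub_le_mul_min_third (hT : 0 < T) (hv : v < 6 * T / 23) :
    23 * v - T ≤ 15 * T * min (1 / 3) (23 / 15 * v / T) := by
  rw [mul_min_of_nonneg _ _ (by positivity : (0 : ℝ) ≤ 15 * T)]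
  refine le_min (by linarith) ?_
  have : 15 * T * (23 / 15 * v / T) = 23 * v := by field_simp
  linarith

lemma mul_min_third_of_lt (hT : 0 < T) (hv : v < 5 * T / 23) :
    15 * T * min (1 / 3) (23 / 15 * v / T) = 23 * v := by
  rw [min_eq_right]
  · field_simp
  · rw [div_le_iff₀ hT]
    linarith

lemma one_le_sum_min_third (hT : 0 < T) (E : Finset ι) (v : ι → ℝ)
    (hv : ∀ j ∈ E, 0 ≤ v j) (hsmall : ∀ j ∈ E, v j < 6 * T / 23)
    (hE : 17 * T / 23 < ∑ j ∈ E, v j) :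
    1 ≤ ∑ j ∈ E, min (1 / 3) (23 / 15 * v j / T) := by
  set f := fun j => min (1 / 3 : ℝ) (23 / 15 * v j / T)
  have hf : ∀ j ∈ E, 0 ≤ f j := fun j hj =>
    le_min (by norm_num) (by have := hv j hj; positivity)
  set S := E.filter (fun j => 5 * T / 23 ≤ v j)
  by_cases hS : 3 ≤ S.card
  · have hS_third : ∀ j ∈ S, 1 / 3 ≤ f j := fun j hj => by
      have := (Finset.mem_filter.mp hj).2
      refine le_min le_rfl ?_
      rw [le_div_iff₀ hT]
      linarith
    calc (1 : ℝ) ≤ S.card * (1 / 3) := by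
          have : (3 : ℝ) ≤ S.card := by exact_mod_cast hS
          linarith
      _ ≤ ∑ j ∈ S, f j := by
          simpa using Finset.card_nsmul_le_sum S f (1 / 3) hS_third
      _ ≤ ∑ j ∈ E, f j :=
          Finset.sum_le_sum_of_subset_of_nonneg (Finset.filter_subset _ _)
            fun j hj _ => hf j hj
  · -- Only the at most two resources of `S` lose `T` in `15T f_j ≥ 23 v_j - T`.
    have hS_le : (S.card : ℝ) ≤ 2 := by exact_mod_cast (show S.card ≤ 2 by omega)
    have hbig : ∑ j ∈ S, (23 * v j - T) ≤ ∑ j ∈ S, 15 * T * f j :=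
      Finset.sum_le_sum fun j hj =>
        sub_le_mul_min_third hT (hsmall j (Finset.mem_filter.mp hj).1)
    have hrest : ∑ j ∈ E.filter (fun j => ¬ 5 * T / 23 ≤ v j), 15 * T * f j
        = ∑ j ∈ E.filter (fun j => ¬ 5 * T / 23 ≤ v j), 23 * v j :=
      Finset.sum_congr rfl fun j hj =>
        mul_min_third_of_lt hT (not_le.mp (Finset.mem_filter.mp hj).2)
    have hsum : 23 * ∑ j ∈ E, v j - S.card * T ≤ 15 * T * ∑ j ∈ E, f j := by
      rw [Finset.mul_sum, Finset.mul_sum,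
        ← Finset.sum_filter_add_sum_filter_not E (fun j => 5 * T / 23 ≤ v j),
        ← Finset.sum_filter_add_sum_filter_not E (fun j => 5 * T / 23 ≤ v j), hrest]
      simp only [Finset.sum_sub_distrib, Finset.sum_const, nsmul_eq_mul] at hbig
      linarith
    nlinarith

end SmallResources

theorem santa_claus_dual_feasibility_claim_general
    {R : Type*}
    (v : R → ℝ) (hv : ∀ j, 0 < v j) (T : ℝ) (hT : 0 < T)
    (C : Finset R) (hC : T ≤ ∑ j ∈ C, v j)
    (D : Set R) [DecidablePred (· ∈ D)]
    (hCD : ∑ j ∈ C.filter (fun j => j ∉ D), v j < T / (23 / 6))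
    (z : R → ℝ)
    (hz : ∀ j, z j =
      if j ∈ D then
        (if T / (23 / 6) ≤ v j then 1 else min (1 / 3) ((23 / 15) * v j / T))
      else 0) :
    1 ≤ ∑ j ∈ C, z j := by
  set E := C.filter (· ∈ D)
  have hsum : ∑ j ∈ C, z j = ∑ j ∈ E, z j := by
    rw [Finset.sum_filter]
    exact Finset.sum_congr rfl fun j _ => by rw [hz j]; split_ifs <;> rfl
  have hz_nonneg : ∀ j, 0 ≤ z j := fun j => by
    rw [hz j]
    split_ifs
    · exact zero_le_one
    · exact le_min (by norm_num) (by have := hv j; positivity)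
    · exact le_rfl
  have hE : 17 * T / 23 < ∑ j ∈ E, v j := by
    linarith [Finset.sum_filter_add_sum_filter_not C (· ∈ D) v]
  rw [hsum]
  by_cases hlarge : ∃ j ∈ E, T / (23 / 6) ≤ v j
  · obtain ⟨j, hjE, hjv⟩ := hlarge
    have hzj : z j = 1 := by rw [hz j, if_pos (Finset.mem_filter.mp hjE).2, if_pos hjv]
    exact hzj ▸ Finset.single_le_sum (fun i _ => hz_nonneg i) hjE
  · push Not at hlarge
    rw [Finset.sum_congr rfl fun j hj => by
      rw [hz j, if_pos (Finset.mem_filter.mp hj).2, if_neg (not_le.mpr (hlarge j hj))]]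
    exact one_le_sum_min_third hT E v (fun j _ => (hv j).le)
      (fun j hj => by linarith [hlarge j hj]) hE

/-- Let `α = 23/6`, `β = 23/15` and `T > 0`.  Let `C` be a finite set of
resources with `v(C) ≥ T`, and let `D` be a set of resources with
`v(C \ D) < T/α`.  Define `z j = 1` if `j ∈ D` and `v j ≥ T/α`;
`z j = min (1/3) (β * v j / T)` if `j ∈ D` and `v j < T/α`; and `z j = 0`
otherwise.  Then `∑ j ∈ C, z j ≥ 1`. -/
theorem santa_claus_dual_feasibility_claim
    {R : Type*} [DecidableEq R]
    (v : R → ℝ) (hv : ∀ j, 0 < v j) (T : ℝ) (hT : 0 < T)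
    (C : Finset R) (hC : T ≤ ∑ j ∈ C, v j)
    (D : Set R) [DecidablePred (· ∈ D)]
    (hCD : ∑ j ∈ C.filter (fun j => j ∉ D), v j < T / (23 / 6))
    (z : R → ℝ)
    (hz : ∀ j, z j =
      if j ∈ D then
        (if T / (23 / 6) ≤ v j then 1 else min (1 / 3) ((23 / 15) * v j / T))
      else 0) :
    1 ≤ ∑ j ∈ C, z j :=
  santa_claus_dual_feasibility_claim_general v hv T hT C hC D hCD z hz
end

section
/- Let α = 23/6, β = 23/15, and T > 0. Let e ⊆ R be minimal for threshold T/α with v_j < T/α for every j ∈ e, and let B be a nonempty finite family of pairwise disjoint sets, each minimal for threshold T/α, each having all its elements of value less than T/α, and each having nonempty intersection with e. Then ∑_{j ∈ e ∪ ⋃_{e'∈B} e'} min{1/3, β·v_j/T} ≤ |B|. -/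
/-- The capped weight sum is bounded by `23/15 * c / T` whenever the total value is `≤ c`. -/
lemma scb_aux_le {R : Type*} (v : R → ℝ) (T : ℝ) (hT : 0 < T)
    (X : Finset R) (c : ℝ) (h : ∑ j ∈ X, v j ≤ c) :
    ∑ j ∈ X, min (1 / 3 : ℝ) ((23 / 15) * v j / T) ≤ (23 / 15) * c / T := by
  calc ∑ j ∈ X, min (1 / 3 : ℝ) ((23 / 15) * v j / T)
      ≤ ∑ j ∈ X, (23 / 15) * v j / T :=
        Finset.sum_le_sum fun j _ => min_le_right _ _
    _ = (23 / 15) * (∑ j ∈ X, v j) / T := by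
        rw [Finset.mul_sum, Finset.sum_div]
    _ ≤ (23 / 15) * c / T := by gcongr

/-- If every singleton-removal keeps the value below `t` and `|X| ≥ 3`, then `v(X) < 3t/2`. -/
lemma scb_aux_val {R : Type*} [DecidableEq R] (v : R → ℝ) (T : ℝ) (hT : 0 < T)
    (X : Finset R) (h3 : 3 ≤ X.card)
    (hmin : ∀ X' ⊂ X, ∑ j ∈ X', v j < T / (23 / 6)) :
    ∑ j ∈ X, v j < 3 / 2 * (T / (23 / 6)) := by
  have hne : X.Nonempty := Finset.card_pos.mp (by omega)
  have hstep : ∀ j ∈ X, (∑ i ∈ X, v i) - v j < T / (23 / 6) := by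
    intro j hj
    have := hmin (X.erase j) (Finset.erase_ssubset hj)
    rwa [Finset.sum_erase_eq_sub hj] at this
  have hsum : ∑ j ∈ X, ((∑ i ∈ X, v i) - v j) < ∑ _j ∈ X, (T / (23 / 6)) :=
    Finset.sum_lt_sum_of_nonempty hne hstep
  rw [Finset.sum_sub_distrib, Finset.sum_const, Finset.sum_const, nsmul_eq_mul,
    nsmul_eq_mul] at hsum
  have hk : (3 : ℝ) ≤ (X.card : ℝ) := by exact_mod_cast h3
  have ht : 0 < T / (23 / 6) := by positivity
  nlinarith [hsum, hk, ht, mul_nonneg (sub_nonneg.mpr hk) ht.le]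

/-- Every set all of whose proper subsets have value `< T/(23/6)` has capped weight `≤ 2/3`. -/
lemma scb_aux_main {R : Type*} [DecidableEq R] (v : R → ℝ) (T : ℝ) (hT : 0 < T)
    (X : Finset R)
    (hmin : ∀ X' ⊂ X, ∑ j ∈ X', v j < T / (23 / 6)) :
    ∑ j ∈ X, min (1 / 3 : ℝ) ((23 / 15) * v j / T) ≤ 2 / 3 := by
  by_cases hc : X.card ≤ 2
  · calc ∑ j ∈ X, min (1 / 3 : ℝ) ((23 / 15) * v j / T)
        ≤ ∑ _j ∈ X, (1 / 3 : ℝ) := Finset.sum_le_sum fun j _ => min_le_left _ _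
      _ = (X.card : ℝ) * (1 / 3) := by rw [Finset.sum_const, nsmul_eq_mul]
      _ ≤ 2 / 3 := by
          have : (X.card : ℝ) ≤ 2 := by exact_mod_cast hc
          linarith
  · have hV := scb_aux_val v T hT X (by omega) hmin
    have h := scb_aux_le v T hT X _ hV.le
    have heq : (23 / 15 : ℝ) * (3 / 2 * (T / (23 / 6))) / T = 3 / 5 := by
      field_simp
      ring
    rw [heq] at h
    linarith

/-- Let `α = 23/6`, `β = 23/15` and `T > 0`.  Let `e` be a finite set of
resources that is minimal for threshold `T/α` (its value is `≥ T/α` and every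
proper subset has value `< T/α`) with all its elements of value `< T/α`, and
let `B` be a nonempty finite family of pairwise disjoint sets, each minimal
for threshold `T/α`, each with all elements of value `< T/α`, and each
meeting `e`.  Then `∑_{j ∈ e ∪ ⋃ B} min (1/3) (β * v j / T) ≤ |B|`. -/
theorem santa_claus_blocked_edge_bound
    {R : Type*} [DecidableEq R]
    (v : R → ℝ) (hv : ∀ j, 0 < v j) (T : ℝ) (hT : 0 < T)
    (e : Finset R)
    (he_min : T / (23 / 6) ≤ ∑ j ∈ e, v j ∧
      ∀ e' ⊂ e, ∑ j ∈ e', v j < T / (23 / 6))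
    (he_thin : ∀ j ∈ e, v j < T / (23 / 6))
    (B : Finset (Finset R)) (hB_ne : B.Nonempty)
    (hB_disj : ∀ b₁ ∈ B, ∀ b₂ ∈ B, b₁ ≠ b₂ → Disjoint b₁ b₂)
    (hB_min : ∀ b ∈ B, T / (23 / 6) ≤ ∑ j ∈ b, v j ∧
      ∀ b' ⊂ b, ∑ j ∈ b', v j < T / (23 / 6))
    (hB_thin : ∀ b ∈ B, ∀ j ∈ b, v j < T / (23 / 6))
    (hB_int : ∀ b ∈ B, (b ∩ e).Nonempty) :
    ∑ j ∈ e ∪ B.biUnion id, min (1 / 3) ((23 / 15) * v j / T) ≤ (B.card : ℝ) := by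
  set w : R → ℝ := fun j => min (1 / 3 : ℝ) ((23 / 15) * v j / T) with hw
  have hw0 : ∀ j, 0 ≤ w j := by
    intro j
    exact le_min (by norm_num) (div_nonneg (mul_nonneg (by norm_num) (hv j).le) hT.le)
  set Y : Finset R := B.biUnion id with hY
  -- split the sum
  have hsplit : ∑ j ∈ e ∪ Y, w j = ∑ j ∈ e \ Y, w j + ∑ b ∈ B, ∑ j ∈ b, w j := by
    rw [← Finset.sdiff_union_self_eq_union, Finset.sum_union Finset.sdiff_disjoint]
    congr 1
    exact Finset.sum_biUnion (fun b₁ h₁ b₂ h₂ hne => hB_disj b₁ h₁ b₂ h₂ hne)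
  -- `e \ Y` is a proper subset of `e`
  obtain ⟨b₀, hb₀⟩ := hB_ne
  obtain ⟨j₀, hj₀⟩ := hB_int b₀ hb₀
  have hj₀b : j₀ ∈ b₀ := (Finset.mem_inter.mp hj₀).1
  have hj₀e : j₀ ∈ e := (Finset.mem_inter.mp hj₀).2
  have hj₀Y : j₀ ∈ Y := Finset.mem_biUnion.mpr ⟨b₀, hb₀, hj₀b⟩
  have hss : e \ Y ⊂ e := by
    refine Finset.ssubset_iff_of_subset (Finset.sdiff_subset) |>.mpr ⟨j₀, hj₀e, ?_⟩
    simp [hj₀Y]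
  have hsdiff : ∑ j ∈ e \ Y, w j ≤ 2 / 5 := by
    have h := scb_aux_le v T hT (e \ Y) (T / (23 / 6)) (he_min.2 _ hss).le
    have heq : (23 / 15 : ℝ) * (T / (23 / 6)) / T = 2 / 5 := by
      field_simp; ring
    rw [heq] at h
    exact h
  rw [hsplit]
  by_cases hB1 : B.card = 1
  · -- single blocked set
    obtain ⟨b, rfl⟩ := Finset.card_eq_one.mp hB1
    have hbB : b ∈ ({b} : Finset (Finset R)) := Finset.mem_singleton_self b
    have hYb : Y = b := by simp [hY]
    rw [Finset.sum_singleton, hB1]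
    obtain ⟨j₁, hj₁⟩ := hB_int b hbB
    have hj₁b : j₁ ∈ b := (Finset.mem_inter.mp hj₁).1
    have hj₁e : j₁ ∈ e := (Finset.mem_inter.mp hj₁).2
    by_cases hbc : b.card ≤ 2
    · -- small blocked set: charge `j₁` to `e`
      have h1 : ∑ j ∈ b, w j = w j₁ + ∑ j ∈ b.erase j₁, w j := by
        rw [Finset.add_sum_erase _ _ hj₁b]
      have h2 : ∑ j ∈ b.erase j₁, w j ≤ 1 / 3 := by
        have hcard : (b.erase j₁).card ≤ 1 := by
          rw [Finset.card_erase_of_mem hj₁b]; omega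
        calc ∑ j ∈ b.erase j₁, w j
            ≤ ∑ _j ∈ b.erase j₁, (1 / 3 : ℝ) :=
              Finset.sum_le_sum fun j _ => min_le_left _ _
          _ = ((b.erase j₁).card : ℝ) * (1 / 3) := by
              rw [Finset.sum_const, nsmul_eq_mul]
          _ ≤ 1 / 3 := by
              have : ((b.erase j₁).card : ℝ) ≤ 1 := by exact_mod_cast hcard
              linarith
      have hj₁nd : j₁ ∉ e \ Y := by simp [hYb, hj₁b]
      have h3 : w j₁ + ∑ j ∈ e \ Y, w j ≤ ∑ j ∈ e, w j := by
        rw [← Finset.sum_insert hj₁nd]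
        refine Finset.sum_le_sum_of_subset_of_nonneg ?_ fun j _ _ => hw0 j
        refine Finset.insert_subset hj₁e (Finset.sdiff_subset)
      have h4 : ∑ j ∈ e, w j ≤ 2 / 3 := scb_aux_main v T hT e he_min.2
      push_cast
      linarith
    · -- big blocked set: its value is `< (3/2) t`
      have hV := scb_aux_val v T hT b (by omega) (hB_min b hbB).2
      have hb5 : ∑ j ∈ b, w j ≤ 3 / 5 := by
        have h := scb_aux_le v T hT b _ hV.le
        have heq : (23 / 15 : ℝ) * (3 / 2 * (T / (23 / 6))) / T = 3 / 5 := by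
          field_simp; ring
        rw [heq] at h
        exact h
      push_cast
      linarith
  · -- at least two blocked sets
    have hB2 : 2 ≤ B.card := by
      have := Finset.card_pos.mpr ⟨b₀, hb₀⟩
      omega
    have hb23 : ∑ b ∈ B, ∑ j ∈ b, w j ≤ (B.card : ℝ) * (2 / 3) := by
      calc ∑ b ∈ B, ∑ j ∈ b, w j
          ≤ ∑ _b ∈ B, (2 / 3 : ℝ) :=
            Finset.sum_le_sum fun b hb => scb_aux_main v T hT b (hB_min b hb).2
        _ = (B.card : ℝ) * (2 / 3) := by rw [Finset.sum_const, nsmul_eq_mul]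
    have hcast : (2 : ℝ) ≤ (B.card : ℝ) := by exact_mod_cast hB2
    linarith
end

section
/- Let α = 23/6, β = 23/15, and T > 0. Let e ⊆ R be minimal for threshold T/α with v_j < T/α for every j ∈ e, and let B be a finite family of at least two pairwise disjoint sets, each minimal for threshold T/α, each having all its elements of value less than T/α, and each having nonempty intersection with e. Then ∑_{j ∈ e ∪ ⋃_{e'∈B} e'} min{1/3, β·v_j/T} ≤ (4/5)·|B|. -/
/-!
Each set `b ∈ B` meets `e`, so `b \ e` is a proper subset of a minimal set and has value
`< T/α`; removing one element from `e` shows likewise that `v(e) < 2T/α`. Hence the union has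
value `< (|B| + 2) T/α`, and bounding each `min` by its second argument gives
`β/α · (|B| + 2) = (2/5)(|B| + 2) ≤ (4/5)|B|` as soon as `|B| ≥ 2`.
-/

open Finset

section

variable {R : Type*} [DecidableEq R] (v : R → ℝ) {t : ℝ}

lemma sum_lt_two_mul_of_minimal {S : Finset R} (hS : S.Nonempty)
    (hmin : ∀ S' ⊂ S, ∑ j ∈ S', v j < t) (hthin : ∀ j ∈ S, v j < t) :
    ∑ j ∈ S, v j < 2 * t := by
  obtain ⟨j, hj⟩ := hS
  have hrest : ∑ i ∈ S.erase j, v i < t := hmin _ (erase_ssubset hj)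
  rw [← add_sum_erase S v hj]
  linarith [hthin j hj]

lemma sum_sdiff_lt_of_minimal {S e : Finset R} (hmin : ∀ S' ⊂ S, ∑ j ∈ S', v j < t)
    (hmeet : (S ∩ e).Nonempty) : ∑ j ∈ S \ e, v j < t := by
  obtain ⟨x, hx⟩ := hmeet
  rw [mem_inter] at hx
  exact hmin _ (ssubset_iff_of_subset sdiff_subset |>.2 ⟨x, hx.1, fun h => (mem_sdiff.1 h).2 hx.2⟩)

lemma sum_union_biUnion_le {e : Finset R} {B : Finset (Finset R)} {c : ℝ}
    (hdisj : ∀ b₁ ∈ B, ∀ b₂ ∈ B, b₁ ≠ b₂ → Disjoint b₁ b₂)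
    (hc : ∀ b ∈ B, ∑ j ∈ b \ e, v j ≤ c) :
    ∑ j ∈ e ∪ B.biUnion id, v j ≤ ∑ j ∈ e, v j + B.card * c := by
  have hsdiff : B.biUnion id \ e = B.biUnion (· \ e) := by
    ext x
    simp only [mem_sdiff, mem_biUnion, id]
    tauto
  have hdisj' : (B : Set (Finset R)).PairwiseDisjoint (· \ e) := fun b₁ hb₁ b₂ hb₂ hne =>
    (hdisj b₁ hb₁ b₂ hb₂ hne).mono sdiff_subset sdiff_subset
  rw [← union_sdiff_self_eq_union, sum_union disjoint_sdiff, hsdiff, sum_biUnion hdisj']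
  gcongr
  simpa using sum_le_card_nsmul B _ c hc

end

theorem santa_claus_multiply_blocked_edge_bound_general
    {R : Type*} [DecidableEq R]
    (v : R → ℝ) (T : ℝ) (hT : 0 < T)
    (e : Finset R)
    (he_min : T / (23 / 6) ≤ ∑ j ∈ e, v j ∧
      ∀ e' ⊂ e, ∑ j ∈ e', v j < T / (23 / 6))
    (he_thin : ∀ j ∈ e, v j < T / (23 / 6))
    (B : Finset (Finset R)) (hB_card : 2 ≤ B.card)
    (hB_disj : ∀ b₁ ∈ B, ∀ b₂ ∈ B, b₁ ≠ b₂ → Disjoint b₁ b₂)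
    (hB_min : ∀ b ∈ B, T / (23 / 6) ≤ ∑ j ∈ b, v j ∧
      ∀ b' ⊂ b, ∑ j ∈ b', v j < T / (23 / 6))
    (hB_int : ∀ b ∈ B, (b ∩ e).Nonempty) :
    ∑ j ∈ e ∪ B.biUnion id, min (1 / 3) ((23 / 15) * v j / T) ≤
      (4 / 5) * (B.card : ℝ) := by
  have he_ne : e.Nonempty :=
    nonempty_of_sum_ne_zero ((lt_of_lt_of_le (by positivity) he_min.1).ne' : ∑ j ∈ e, v j ≠ 0)
  have he_sum := sum_lt_two_mul_of_minimal v he_ne he_min.2 he_thin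
  have hunion := sum_union_biUnion_le v hB_disj fun b hb =>
    (sum_sdiff_lt_of_minimal v (hB_min b hb).2 (hB_int b hb)).le
  have hcard : (2 : ℝ) ≤ B.card := by exact_mod_cast hB_card
  calc ∑ j ∈ e ∪ B.biUnion id, min (1 / 3) ((23 / 15) * v j / T)
      ≤ ∑ j ∈ e ∪ B.biUnion id, (23 / 15) * v j / T := sum_le_sum fun _ _ => min_le_right _ _
    _ = (23 / 15) / T * ∑ j ∈ e ∪ B.biUnion id, v j := by
      rw [mul_sum]; exact sum_congr rfl fun _ _ => by ring
    _ ≤ (23 / 15) / T * ((B.card + 2) * (T / (23 / 6))) := by gcongr; linarith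
    _ = (2 / 5) * (B.card + 2) := by field_simp; ring
    _ ≤ (4 / 5) * B.card := by linarith

/-- Let `α = 23/6`, `β = 23/15` and `T > 0`.  Let `e` be a finite set of
resources that is minimal for threshold `T/α` with all its elements of value
`< T/α`, and let `B` be a finite family of at least two pairwise disjoint
sets, each minimal for threshold `T/α`, each with all elements of value
`< T/α`, and each meeting `e`.  Then
`∑_{j ∈ e ∪ ⋃ B} min (1/3) (β * v j / T) ≤ (4/5) * |B|`. -/
theorem santa_claus_multiply_blocked_edge_bound
    {R : Type*} [DecidableEq R]
    (v : R → ℝ) (hv : ∀ j, 0 < v j) (T : ℝ) (hT : 0 < T)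
    (e : Finset R)
    (he_min : T / (23 / 6) ≤ ∑ j ∈ e, v j ∧
      ∀ e' ⊂ e, ∑ j ∈ e', v j < T / (23 / 6))
    (he_thin : ∀ j ∈ e, v j < T / (23 / 6))
    (B : Finset (Finset R)) (hB_card : 2 ≤ B.card)
    (hB_disj : ∀ b₁ ∈ B, ∀ b₂ ∈ B, b₁ ≠ b₂ → Disjoint b₁ b₂)
    (hB_min : ∀ b ∈ B, T / (23 / 6) ≤ ∑ j ∈ b, v j ∧
      ∀ b' ⊂ b, ∑ j ∈ b', v j < T / (23 / 6))
    (hB_thin : ∀ b ∈ B, ∀ j ∈ b, v j < T / (23 / 6))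
    (hB_int : ∀ b ∈ B, (b ∩ e).Nonempty) :
    ∑ j ∈ e ∪ B.biUnion id, min (1 / 3) ((23 / 15) * v j / T) ≤
      (4 / 5) * (B.card : ℝ) :=
  santa_claus_multiply_blocked_edge_bound_general v T hT e he_min he_thin B hB_card hB_disj hB_min
    hB_int
end

section
/- Let α = 23/6, β = 23/15, and T > 0. Let e, e' ⊆ R each be minimal for threshold T/α with all elements of value less than T/α, and suppose e ∩ e' ≠ ∅. If min_{j ∈ e ∪ e'} v_j ≤ (1/2)·T/α, then ∑_{j ∈ e ∪ e'} min{1/3, β·v_j/T} ≤ 1. -/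
/-- Let `α = 23/6`, `β = 23/15` and `T > 0`.  Let `e, e'` each be minimal for
threshold `T/α` with all elements of value `< T/α`, and suppose `e ∩ e' ≠ ∅`.
If the minimum value of a resource in `e ∪ e'` is at most `(1/2) * T/α`, then
`∑_{j ∈ e ∪ e'} min (1/3) (β * v j / T) ≤ 1`. -/
theorem santa_claus_single_blocker_small_min
    {R : Type*} [DecidableEq R]
    (v : R → ℝ) (hv : ∀ j, 0 < v j) (T : ℝ) (hT : 0 < T)
    (e e' : Finset R)
    (he_min : T / (23 / 6) ≤ ∑ j ∈ e, v j ∧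
      ∀ S ⊂ e, ∑ j ∈ S, v j < T / (23 / 6))
    (he'_min : T / (23 / 6) ≤ ∑ j ∈ e', v j ∧
      ∀ S ⊂ e', ∑ j ∈ S, v j < T / (23 / 6))
    (he_thin : ∀ j ∈ e, v j < T / (23 / 6))
    (he'_thin : ∀ j ∈ e', v j < T / (23 / 6))
    (hint : (e ∩ e').Nonempty)
    (hmin : (e ∪ e').inf'
        (hint.mono (Finset.inter_subset_left.trans Finset.subset_union_left)) v ≤
      (1 / 2) * (T / (23 / 6))) :
    ∑ j ∈ e ∪ e', min (1 / 3) ((23 / 15) * v j / T) ≤ 1 := by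
  obtain ⟨j0, hj0mem, hj0⟩ := (e ∪ e').exists_mem_eq_inf'
    (hint.mono (Finset.inter_subset_left.trans Finset.subset_union_left)) v
  rw [hj0] at hmin
  obtain ⟨i, hi⟩ := hint
  have hie : i ∈ e := (Finset.mem_inter.1 hi).1
  have hie' : i ∈ e' := (Finset.mem_inter.1 hi).2
  -- bound on total value of the union
  have hA : ∑ j ∈ e ∪ e', v j < (5 / 2) * (T / (23 / 6)) := by
    rcases Finset.mem_union.1 hj0mem with hj0e | hj0e
    · have h1 : ∑ j ∈ e.erase j0, v j < T / (23 / 6) :=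
        he_min.2 _ (Finset.erase_ssubset hj0e)
      have h2 : ∑ j ∈ e.erase j0, v j + v j0 = ∑ j ∈ e, v j :=
        Finset.sum_erase_add e v hj0e
      have h3 : e' \ e ⊂ e' := by
        refine ⟨Finset.sdiff_subset, fun hsub => ?_⟩
        have := hsub hie'
        simp only [Finset.mem_sdiff] at this
        exact this.2 hie
      have h4 := he'_min.2 _ h3
      have h5 : ∑ j ∈ e ∪ e', v j = ∑ j ∈ e, v j + ∑ j ∈ e' \ e, v j := by
        rw [← Finset.union_sdiff_self_eq_union, Finset.sum_union Finset.disjoint_sdiff]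
      linarith
    · have h1 : ∑ j ∈ e'.erase j0, v j < T / (23 / 6) :=
        he'_min.2 _ (Finset.erase_ssubset hj0e)
      have h2 : ∑ j ∈ e'.erase j0, v j + v j0 = ∑ j ∈ e', v j :=
        Finset.sum_erase_add e' v hj0e
      have h3 : e \ e' ⊂ e := by
        refine ⟨Finset.sdiff_subset, fun hsub => ?_⟩
        have := hsub hie
        simp only [Finset.mem_sdiff] at this
        exact this.2 hie'
      have h4 := he_min.2 _ h3
      have h5 : ∑ j ∈ e ∪ e', v j = ∑ j ∈ e', v j + ∑ j ∈ e \ e', v j := by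
        rw [Finset.union_comm, ← Finset.union_sdiff_self_eq_union,
          Finset.sum_union Finset.disjoint_sdiff]
      linarith
  have hstep : ∑ j ∈ e ∪ e', min (1 / 3) ((23 / 15) * v j / T) ≤
      ∑ j ∈ e ∪ e', (23 / 15) * v j / T :=
    Finset.sum_le_sum fun j _ => min_le_right _ _
  have heq : ∑ j ∈ e ∪ e', (23 / 15) * v j / T =
      23 / (15 * T) * ∑ j ∈ e ∪ e', v j := by
    rw [Finset.mul_sum]
    exact Finset.sum_congr rfl fun j _ => by ring
  have hfin : 23 / (15 * T) * ∑ j ∈ e ∪ e', v j ≤ 1 := by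
    rw [div_mul_eq_mul_div, div_le_one (by positivity)]
    have hu : T / (23 / 6) = 6 / 23 * T := by ring
    rw [hu] at hA
    nlinarith
  linarith
end

section
/- Let α = 23/6, β = 23/15, and T > 0. Let e, e' ⊆ R be distinct sets, each minimal for threshold T/α with all elements of value less than T/α, and suppose e ∩ e' ≠ ∅. If min_{j ∈ e ∪ e'} v_j > (1/2)·T/α, then each of the three sets e \ e', e ∩ e', and e' \ e contains exactly one element, and ∑_{j ∈ e ∪ e'} min{1/3, β·v_j/T} ≤ 1. -/
/-!
Every resource of `e ∪ e'` is worth more than half the threshold `t = T / α` but less than `t`.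
So a single resource never reaches `t`, while any two of them do; minimality then forces
`|e| = |e'| = 2`. Two distinct `2`-sets that meet share exactly one element, so `e ∪ e'` has
three elements, and each term of the sum is at most `1 / 3`.
-/

namespace Finset

variable {ι : Type*}

theorem card_le_of_forall_ssubset_sum_lt {f : Finset ι} {v : ι → ℝ} {t : ℝ} {k : ℕ}
    (hsub : ∀ S ⊂ f, ∑ j ∈ S, v j < t) (hlarge : ∀ j ∈ f, t < k * v j) : #f ≤ k := by
  by_contra! hk
  obtain ⟨S, hSf, hS⟩ := exists_subset_card_eq hk.le
  have hSf : S ⊂ f := hSf.ssubset_of_ne (by rintro rfl; omega)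
  obtain rfl | hk0 := k.eq_zero_or_pos
  · obtain ⟨j, hj⟩ := card_pos.1 hk
    have h_empty := hsub ∅ (empty_ssubset.2 ⟨j, hj⟩)
    have h_j := hlarge j hj
    rw [sum_empty] at h_empty
    rw [Nat.cast_zero, zero_mul] at h_j
    linarith
  · have hS_sum : (k : ℝ) * t ≤ k * ∑ j ∈ S, v j := by
      simpa [hS, mul_sum] using card_nsmul_le_sum S (fun j ↦ k * v j) t
        fun j hj ↦ (hlarge j (hSf.subset hj)).le
    have hk0 : (0 : ℝ) < k := by exact_mod_cast hk0
    exact (hS_sum.trans_lt (mul_lt_mul_of_pos_left (hsub S hSf) hk0)).false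

theorem one_lt_card_of_le_sum {f : Finset ι} {v : ι → ℝ} {t : ℝ} (hf : f.Nonempty)
    (hsum : t ≤ ∑ j ∈ f, v j) (hsmall : ∀ j ∈ f, v j < t) : 1 < #f := by
  obtain ⟨a, rfl⟩ | hf := hf.exists_eq_singleton_or_nontrivial
  · simp only [sum_singleton] at hsum
    exact absurd hsum (hsmall a (mem_singleton_self a)).not_ge
  · exact one_lt_card_iff_nontrivial.2 hf

theorem card_inter_lt_of_card_eq_of_ne [DecidableEq ι] {s t : Finset ι} (hcard : #s = #t)
    (hne : s ≠ t) : #(s ∩ t) < #s := by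
  by_contra! h
  have hst : s ⊆ t := inter_eq_left.1 (eq_of_subset_of_card_le inter_subset_left h)
  exact hne (eq_of_subset_of_card_le hst hcard.ge)

end Finset

open Finset in
theorem santa_claus_single_blocker_large_min_general
    {R : Type*} [DecidableEq R]
    (v : R → ℝ) (T : ℝ)
    (e e' : Finset R) (hne : e ≠ e')
    (he_min : T / (23 / 6) ≤ ∑ j ∈ e, v j ∧
      ∀ S ⊂ e, ∑ j ∈ S, v j < T / (23 / 6))
    (he'_min : T / (23 / 6) ≤ ∑ j ∈ e', v j ∧
      ∀ S ⊂ e', ∑ j ∈ S, v j < T / (23 / 6))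
    (he_thin : ∀ j ∈ e, v j < T / (23 / 6))
    (he'_thin : ∀ j ∈ e', v j < T / (23 / 6))
    (hint : (e ∩ e').Nonempty)
    (hmin : (1 / 2) * (T / (23 / 6)) <
      (e ∪ e').inf'
        (hint.mono (Finset.inter_subset_left.trans Finset.subset_union_left)) v) :
    (e \ e').card = 1 ∧ (e ∩ e').card = 1 ∧ (e' \ e).card = 1 ∧
      ∑ j ∈ e ∪ e', min (1 / 3) ((23 / 15) * v j / T) ≤ 1 := by
  have hlarge : ∀ j ∈ e ∪ e', T / (23 / 6) < (2 : ℕ) * v j := fun j hj ↦ by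
    have := (lt_inf'_iff _).1 hmin j hj
    push_cast
    linarith
  have he : #e = 2 := le_antisymm
    (card_le_of_forall_ssubset_sum_lt he_min.2 fun j hj ↦ hlarge j (mem_union_left _ hj))
    (one_lt_card_of_le_sum (hint.mono inter_subset_left) he_min.1 he_thin)
  have he' : #e' = 2 := le_antisymm
    (card_le_of_forall_ssubset_sum_lt he'_min.2 fun j hj ↦ hlarge j (mem_union_right _ hj))
    (one_lt_card_of_le_sum (hint.mono inter_subset_right) he'_min.1 he'_thin)
  have hinter : #(e ∩ e') = 1 := by
    have := card_inter_lt_of_card_eq_of_ne (he.trans he'.symm) hne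
    have := hint.card_pos
    omega
  have hsdiff := card_sdiff_add_card_inter e e'
  have hsdiff' := card_sdiff_add_card_inter e' e
  have hunion := card_union_add_card_inter e e'
  rw [inter_comm] at hsdiff'
  refine ⟨by omega, hinter, by omega, ?_⟩
  calc ∑ j ∈ e ∪ e', min (1 / 3) ((23 / 15) * v j / T)
      ≤ #(e ∪ e') • (1 / 3 : ℝ) := sum_le_card_nsmul _ _ _ fun j _ ↦ min_le_left _ _
    _ = 1 := by rw [show #(e ∪ e') = 3 by omega]; norm_num

/-- Let `α = 23/6`, `β = 23/15` and `T > 0`.  Let `e, e'` be distinct sets, each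
minimal for threshold `T/α` with all elements of value `< T/α`, and suppose
`e ∩ e' ≠ ∅`.  If the minimum value of a resource in `e ∪ e'` is greater than
`(1/2) * T/α`, then each of `e \ e'`, `e ∩ e'` and `e' \ e` contains exactly
one element, and `∑_{j ∈ e ∪ e'} min (1/3) (β * v j / T) ≤ 1`. -/
theorem santa_claus_single_blocker_large_min
    {R : Type*} [DecidableEq R]
    (v : R → ℝ) (hv : ∀ j, 0 < v j) (T : ℝ) (hT : 0 < T)
    (e e' : Finset R) (hne : e ≠ e')
    (he_min : T / (23 / 6) ≤ ∑ j ∈ e, v j ∧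
      ∀ S ⊂ e, ∑ j ∈ S, v j < T / (23 / 6))
    (he'_min : T / (23 / 6) ≤ ∑ j ∈ e', v j ∧
      ∀ S ⊂ e', ∑ j ∈ S, v j < T / (23 / 6))
    (he_thin : ∀ j ∈ e, v j < T / (23 / 6))
    (he'_thin : ∀ j ∈ e', v j < T / (23 / 6))
    (hint : (e ∩ e').Nonempty)
    (hmin : (1 / 2) * (T / (23 / 6)) <
      (e ∪ e').inf'
        (hint.mono (Finset.inter_subset_left.trans Finset.subset_union_left)) v) :
    (e \ e').card = 1 ∧ (e ∩ e').card = 1 ∧ (e' \ e).card = 1 ∧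
      ∑ j ∈ e ∪ e', min (1 / 3) ((23 / 15) * v j / T) ≤ 1 :=
  santa_claus_single_blocker_large_min_general v T e e' hne he_min he'_min he_thin he'_thin hint
    hmin
end

section
/- Let t > 0 and let e, e' ⊆ R each be minimal for threshold t, with e ∩ e' ≠ ∅. Then v(e ∪ e') ≤ 2t + min_{j ∈ e ∪ e'} v_j. -/
/-- Let `t > 0` and let `e, e'` each be minimal for threshold `t` (value `≥ t`,
every proper subset of value `< t`), with `e ∩ e' ≠ ∅`.  Then
`v(e ∪ e') ≤ 2t + min_{j ∈ e ∪ e'} v j`. -/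
theorem santa_claus_union_value_bound
    {R : Type*} [DecidableEq R]
    (v : R → ℝ) (hv : ∀ j, 0 < v j) (t : ℝ) (ht : 0 < t)
    (e e' : Finset R)
    (he_min : t ≤ ∑ j ∈ e, v j ∧ ∀ S ⊂ e, ∑ j ∈ S, v j < t)
    (he'_min : t ≤ ∑ j ∈ e', v j ∧ ∀ S ⊂ e', ∑ j ∈ S, v j < t)
    (hint : (e ∩ e').Nonempty) :
    ∑ j ∈ e ∪ e', v j ≤ 2 * t +
      (e ∪ e').inf'
        (hint.mono (Finset.inter_subset_left.trans Finset.subset_union_left)) v := by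
  have hne : (e ∪ e').Nonempty :=
    hint.mono (Finset.inter_subset_left.trans Finset.subset_union_left)
  -- key: for minimal set S and j ∈ S, v(S) < t + v j
  have key : ∀ (S : Finset R), (∀ T ⊂ S, ∑ j ∈ T, v j < t) → ∀ j ∈ S,
      ∑ i ∈ S, v i < t + v j := by
    intro S hS j hj
    have h1 : ∑ i ∈ S.erase j, v i < t := hS _ (Finset.erase_ssubset hj)
    have h2 : ∑ i ∈ S, v i = v j + ∑ i ∈ S.erase j, v i :=
      (Finset.add_sum_erase S v hj).symm
    linarith
  obtain ⟨j₀, hj₀⟩ := id hint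
  have hj₀e : j₀ ∈ e := Finset.mem_inter.mp hj₀ |>.1
  have hj₀e' : j₀ ∈ e' := Finset.mem_inter.mp hj₀ |>.2
  obtain ⟨js, hjs, hjseq⟩ := Finset.exists_mem_eq_inf' hne v
  have hIE : ∑ j ∈ e ∪ e', v j + ∑ j ∈ e ∩ e', v j = ∑ j ∈ e, v j + ∑ j ∈ e', v j :=
    Finset.sum_union_inter
  have hinter : v j₀ ≤ ∑ j ∈ e ∩ e', v j :=
    Finset.single_le_sum (fun i _ => (hv i).le) hj₀
  have hjseq' : (e ∪ e').inf'
      (hint.mono (Finset.inter_subset_left.trans Finset.subset_union_left)) v = v js := hjseq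
  rw [hjseq']
  rcases Finset.mem_union.mp hjs with h | h
  · have h1 := key e he_min.2 js h
    have h2 := key e' he'_min.2 j₀ hj₀e'
    linarith
  · have h1 := key e' he'_min.2 js h
    have h2 := key e he_min.2 j₀ hj₀e
    linarith
end

section
/- Let β = 23/15. Let M ⊆ H be a matching and let A ⊆ H \ M be a finite set of addable edges whose resource sets are pairwise disjoint, such that every e ∈ A is blocked (B(e) ≠ ∅) and every edge of M intersects, in resources, the resource set of at most one edge of A. Define z_j = 1 if j ∈ A_R ∪ B_R and v_j ≥ t; z_j = min{1/3, β·v_j/τ} if j ∈ A_R ∪ B_R and v_j < t; and z_j = 0 otherwise. Then ∑_{j∈R} z_j ≤ |B|; in particular ∑_{j∈R} z_j < |B_P| + 1. -/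
/-!
Group the support of `z` into one cell per addable edge `e`: its resources together with those of
its blockers `B(e)`. Since every blocking edge meets only one addable edge, the groups `B(e)` are
disjoint subsets of `B`, so it suffices to bound the `z`-mass of each cell by `|B(e)|`. Write
`t = 6τ/23`; minimality means that every proper subset of an edge has value `< t`, and small
resources have `z_j ≤ (23/15) v_j/τ`, so a set of them of value `< t` has mass `< β/α = 2/5`.
If `e` contains a big resource, then `e` and all of its blockers are that single resource.
Otherwise, with two or more blockers, `e` contributes at most `1/3 + 2/5` and each blocker at most
`2/5` outside `e`. With a single blocker `e'`, either one of the two edges has at least three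
resources, so its value is below `3t/2` and the union has value below `5t/2`, or the union has at
most three resources, each of mass at most `1/3`. Finally, `|B_P| = |B|` since `M` is a matching.
-/

open Finset

namespace Finset

variable {ι R : Type*} [DecidableEq R]

lemma sum_union_le_of_nonneg {f : R → ℝ} (hf : ∀ x, 0 ≤ f x) (s t : Finset R) :
    ∑ x ∈ s ∪ t, f x ≤ ∑ x ∈ s, f x + ∑ x ∈ t, f x := by
  rw [← sum_union_inter]
  exact le_add_of_nonneg_right (sum_nonneg fun x _ => hf x)

lemma sum_biUnion_le_of_nonneg {f : R → ℝ} (hf : ∀ x, 0 ≤ f x) (s : Finset ι)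
    (t : ι → Finset R) : ∑ x ∈ s.biUnion t, f x ≤ ∑ i ∈ s, ∑ x ∈ t i, f x := by
  rw [← sup_eq_biUnion]
  exact apply_sup_le_sum (f := fun u => ∑ x ∈ u, f x) sum_empty (sum_union_le_of_nonneg hf _ _) s

lemma sum_biUnion_le_card_biUnion {κ : Type*} [DecidableEq κ] {f : R → ℝ}
    (hf : ∀ x, 0 ≤ f x) {s : Finset ι} {cell : ι → Finset R} {group : ι → Finset κ}
    (hgroup : (s : Set ι).PairwiseDisjoint group)
    (hcell : ∀ i ∈ s, ∑ x ∈ cell i, f x ≤ #(group i)) :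
    ∑ x ∈ s.biUnion cell, f x ≤ #(s.biUnion group) := by
  calc ∑ x ∈ s.biUnion cell, f x ≤ ∑ i ∈ s, ∑ x ∈ cell i, f x := sum_biUnion_le_of_nonneg hf _ _
    _ ≤ ∑ i ∈ s, (#(group i) : ℝ) := sum_le_sum hcell
    _ = #(s.biUnion group) := by rw [card_biUnion hgroup]; push_cast; rfl

end Finset

section Threshold

variable {R : Type*} [DecidableEq R] {v : R → ℝ} {t : ℝ} {C D : Finset R}

lemma eq_singleton_of_le_of_forall_ssubset (hC : ∀ C' ⊂ C, ∑ j ∈ C', v j < t) {j : R}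
    (hj : j ∈ C) (hjt : t ≤ v j) : C = {j} := by
  by_contra hne
  have := hC {j} (Finset.ssubset_iff_subset_ne.mpr ⟨singleton_subset_iff.mpr hj, Ne.symm hne⟩)
  rw [sum_singleton] at this
  linarith

lemma forall_lt_of_inter_nonempty (hD : ∀ D' ⊂ D, ∑ j ∈ D', v j < t)
    (hDC : (D ∩ C).Nonempty) (hCs : ∀ j ∈ C, v j < t) : ∀ j ∈ D, v j < t := by
  intro j hj
  by_contra! hjt
  obtain ⟨x, hx⟩ := hDC
  rw [mem_inter, eq_singleton_of_le_of_forall_ssubset hD hj hjt, mem_singleton] at hx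
  exact (hCs x hx.2).not_ge (hx.1 ▸ hjt)

lemma sum_sdiff_lt_of_inter_nonempty (hC : ∀ C' ⊂ C, ∑ j ∈ C', v j < t)
    (hCD : (C ∩ D).Nonempty) : ∑ j ∈ C \ D, v j < t :=
  hC _ (by rw [← sdiff_inter_self_left]; exact sdiff_ssubset inter_subset_left hCD)

/-- Removing the lightest of at least `n` resources drops the value below `t`. -/
lemma sub_one_mul_sum_lt_of_le_card (hv : ∀ j, 0 ≤ v j) (hC : ∀ C' ⊂ C, ∑ j ∈ C', v j < t)
    {n : ℕ} (hn : 0 < n) (hcard : n ≤ #C) : ((n : ℝ) - 1) * ∑ j ∈ C, v j < n * t := by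
  obtain ⟨m, hm, hmin⟩ := C.exists_min_image v (card_pos.mp (hn.trans_le hcard))
  have hlt : (n : ℝ) * ∑ j ∈ C.erase m, v j < n * t :=
    mul_lt_mul_of_pos_left (hC _ (erase_ssubset hm)) (Nat.cast_pos.mpr hn)
  have hnm : (n : ℝ) * v m ≤ ∑ j ∈ C, v j :=
    calc (n : ℝ) * v m ≤ #C * v m := mul_le_mul_of_nonneg_right (by exact_mod_cast hcard) (hv m)
      _ = #C • v m := (nsmul_eq_mul _ _).symm
      _ ≤ ∑ j ∈ C, v j := card_nsmul_le_sum C v (v m) hmin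
  have hsplit : ((n : ℝ) - 1) * ∑ j ∈ C, v j =
      n * ∑ j ∈ C.erase m, v j + (n * v m - ∑ j ∈ C, v j) := by
    rw [← sum_erase_add _ _ hm]; ring
  linarith

end Threshold

/-- The value of `z_j` for `j ∈ A_R ∪ B_R`. -/
noncomputable def dualWeight {R : Type*} (v : R → ℝ) (τ : ℝ) (j : R) : ℝ :=
  if τ / (23 / 6) ≤ v j then 1 else min (1 / 3) (23 / 15 * v j / τ)

section DualWeight

variable {R : Type*} {v : R → ℝ} {τ : ℝ}

lemma dualWeight_nonneg (hv : ∀ j, 0 ≤ v j) (hτ : 0 ≤ τ) (j : R) : 0 ≤ dualWeight v τ j := by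
  unfold dualWeight
  split_ifs
  · exact zero_le_one
  · exact le_min (by norm_num) (by have := hv j; positivity)

lemma dualWeight_of_le {j : R} (h : τ / (23 / 6) ≤ v j) : dualWeight v τ j = 1 :=
  if_pos h

lemma dualWeight_le_one_third {j : R} (h : v j < τ / (23 / 6)) : dualWeight v τ j ≤ 1 / 3 := by
  rw [dualWeight, if_neg h.not_ge]
  exact min_le_left _ _

lemma sum_dualWeight_le_of_sum_le (hτ : 0 < τ) {S : Finset R}
    (hS : ∀ j ∈ S, v j < τ / (23 / 6)) {c : ℝ} (hSc : ∑ j ∈ S, v j ≤ c * (τ / (23 / 6))) :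
    ∑ j ∈ S, dualWeight v τ j ≤ 2 / 5 * c := by
  calc ∑ j ∈ S, dualWeight v τ j ≤ ∑ j ∈ S, 23 / 15 * v j / τ := by
        refine sum_le_sum fun j hj => ?_
        rw [dualWeight, if_neg (hS j hj).not_ge]
        exact min_le_right _ _
    _ = 23 / 15 / τ * ∑ j ∈ S, v j := by rw [mul_sum]; exact sum_congr rfl fun j _ => by ring
    _ ≤ 23 / 15 / τ * (c * (τ / (23 / 6))) := by gcongr
    _ = 2 / 5 * c := by field_simp; ring

variable [DecidableEq R] {C D : Finset R}

lemma sum_dualWeight_union_le_one_of_three_le_card (hv : ∀ j, 0 ≤ v j) (hτ : 0 < τ)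
    (hC : ∀ C' ⊂ C, ∑ j ∈ C', v j < τ / (23 / 6)) (hD : ∀ D' ⊂ D, ∑ j ∈ D', v j < τ / (23 / 6))
    (hs : ∀ j ∈ C ∪ D, v j < τ / (23 / 6)) (hCD : (C ∩ D).Nonempty) (h3 : 3 ≤ #C) :
    ∑ j ∈ C ∪ D, dualWeight v τ j ≤ 1 := by
  have hCv := sub_one_mul_sum_lt_of_le_card hv hC (n := 3) (by norm_num) h3
  have hDv := sum_sdiff_lt_of_inter_nonempty hD (by rwa [inter_comm])
  have hval : ∑ j ∈ C ∪ D, v j ≤ 5 / 2 * (τ / (23 / 6)) := by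
    rw [← union_sdiff_self_eq_union, sum_union disjoint_sdiff]
    push_cast at hCv
    linarith
  linarith [sum_dualWeight_le_of_sum_le hτ hs hval]

lemma sum_dualWeight_union_le_one (hv : ∀ j, 0 ≤ v j) (hτ : 0 < τ)
    (hC : ∀ C' ⊂ C, ∑ j ∈ C', v j < τ / (23 / 6)) (hD : ∀ D' ⊂ D, ∑ j ∈ D', v j < τ / (23 / 6))
    (hs : ∀ j ∈ C ∪ D, v j < τ / (23 / 6)) (hCD : (C ∩ D).Nonempty) :
    ∑ j ∈ C ∪ D, dualWeight v τ j ≤ 1 := by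
  by_cases h3 : 3 ≤ #C ∨ 3 ≤ #D
  · rcases h3 with h3 | h3
    · exact sum_dualWeight_union_le_one_of_three_le_card hv hτ hC hD hs hCD h3
    · rw [union_comm] at hs ⊢
      exact sum_dualWeight_union_le_one_of_three_le_card hv hτ hD hC hs
        (by rwa [inter_comm]) h3
  · have hcard : (#(C ∪ D) : ℝ) ≤ 3 := by
      have := card_union_add_card_inter C D
      have := card_pos.mpr hCD
      norm_cast
      omega
    calc ∑ j ∈ C ∪ D, dualWeight v τ j ≤ #(C ∪ D) • (1 / 3 : ℝ) :=
          sum_le_card_nsmul _ _ _ fun j hj => dualWeight_le_one_third (hs j hj)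
      _ ≤ 1 := by rw [nsmul_eq_mul]; linarith

variable {ι : Type*} {blk : Finset ι} {D : ι → Finset R}

lemma sum_dualWeight_cell_le_of_threshold_le (hC : ∀ C' ⊂ C, ∑ j ∈ C', v j < τ / (23 / 6))
    (hblk : blk.Nonempty) (hD : ∀ b ∈ blk, ∀ D' ⊂ D b, ∑ j ∈ D', v j < τ / (23 / 6))
    (hmeet : ∀ b ∈ blk, (D b ∩ C).Nonempty) {j₀ : R} (hj₀ : j₀ ∈ C)
    (hjt : τ / (23 / 6) ≤ v j₀) :
    ∑ j ∈ C ∪ blk.biUnion D, dualWeight v τ j ≤ #blk := by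
  have hCj := eq_singleton_of_le_of_forall_ssubset hC hj₀ hjt
  have hDj : ∀ b ∈ blk, D b ⊆ C := by
    intro b hb
    obtain ⟨x, hx⟩ := hmeet b hb
    obtain ⟨hxD, hxC⟩ := mem_inter.mp hx
    rw [hCj, mem_singleton] at hxC
    rw [hCj, eq_singleton_of_le_of_forall_ssubset (hD b hb) (hxC ▸ hxD) hjt]
  rw [union_eq_left.mpr (biUnion_subset.mpr hDj), hCj, sum_singleton, dualWeight_of_le hjt]
  exact_mod_cast card_pos.mpr hblk

lemma sum_dualWeight_cell_le_of_two_le_card (hv : ∀ j, 0 ≤ v j) (hτ : 0 < τ)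
    (hC : ∀ C' ⊂ C, ∑ j ∈ C', v j < τ / (23 / 6))
    (hD : ∀ b ∈ blk, ∀ D' ⊂ D b, ∑ j ∈ D', v j < τ / (23 / 6))
    (hmeet : ∀ b ∈ blk, (D b ∩ C).Nonempty) (hCs : ∀ j ∈ C, v j < τ / (23 / 6))
    (hDs : ∀ b ∈ blk, ∀ j ∈ D b, v j < τ / (23 / 6)) (h2 : 2 ≤ #blk) :
    ∑ j ∈ C ∪ blk.biUnion D, dualWeight v τ j ≤ #blk := by
  obtain ⟨b, hb⟩ := card_pos.mp (by omega : 0 < #blk)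
  obtain ⟨a, ha⟩ := (hmeet b hb).mono inter_subset_right
  have hCz : ∑ j ∈ C, dualWeight v τ j ≤ 1 / 3 + 2 / 5 := by
    rw [← sum_erase_add _ _ ha]
    have := sum_dualWeight_le_of_sum_le hτ (fun j hj => hCs j (mem_of_mem_erase hj)) (c := 1)
      (by rw [one_mul]; exact (hC _ (erase_ssubset ha)).le)
    linarith [dualWeight_le_one_third (hCs a ha)]
  have hDz : ∀ b ∈ blk, ∑ j ∈ D b \ C, dualWeight v τ j ≤ 2 / 5 := fun b hb => by
    simpa using sum_dualWeight_le_of_sum_le hτ (fun j hj => hDs b hb j (mem_sdiff.mp hj).1)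
      (c := 1) (by rw [one_mul]; exact (sum_sdiff_lt_of_inter_nonempty (hD b hb) (hmeet b hb)).le)
  have hcell : C ∪ blk.biUnion D = C ∪ blk.biUnion fun b => D b \ C := by
    ext j
    simp only [mem_union, mem_biUnion, mem_sdiff]
    tauto
  have hz := dualWeight_nonneg hv hτ.le
  have h2' : (2 : ℝ) ≤ #blk := by exact_mod_cast h2
  calc ∑ j ∈ C ∪ blk.biUnion D, dualWeight v τ j
      ≤ ∑ j ∈ C, dualWeight v τ j + ∑ b ∈ blk, ∑ j ∈ D b \ C, dualWeight v τ j := by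
        rw [hcell]
        exact (sum_union_le_of_nonneg hz _ _).trans
          (add_le_add le_rfl (sum_biUnion_le_of_nonneg hz _ _))
    _ ≤ (1 / 3 + 2 / 5) + #blk • (2 / 5 : ℝ) := add_le_add hCz (sum_le_card_nsmul _ _ _ hDz)
    _ ≤ #blk := by rw [nsmul_eq_mul]; linarith

lemma sum_dualWeight_cell_le (hv : ∀ j, 0 ≤ v j) (hτ : 0 < τ)
    (hC : ∀ C' ⊂ C, ∑ j ∈ C', v j < τ / (23 / 6)) (hblk : blk.Nonempty)
    (hD : ∀ b ∈ blk, ∀ D' ⊂ D b, ∑ j ∈ D', v j < τ / (23 / 6))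
    (hmeet : ∀ b ∈ blk, (D b ∩ C).Nonempty) :
    ∑ j ∈ C ∪ blk.biUnion D, dualWeight v τ j ≤ #blk := by
  by_cases hbig : ∃ j₀ ∈ C, τ / (23 / 6) ≤ v j₀
  · obtain ⟨j₀, hj₀, hjt⟩ := hbig
    exact sum_dualWeight_cell_le_of_threshold_le hC hblk hD hmeet hj₀ hjt
  push Not at hbig
  have hDs b hb := forall_lt_of_inter_nonempty (hD b hb) (hmeet b hb) hbig
  obtain hsingle | htwo := (one_le_card.mpr hblk).eq_or_lt
  · obtain ⟨b, rfl⟩ := card_eq_one.mp hsingle.symm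
    rw [singleton_biUnion, card_singleton, Nat.cast_one]
    refine sum_dualWeight_union_le_one hv hτ hC (hD b (mem_singleton_self b)) ?_ ?_
    · exact fun j hj => (mem_union.mp hj).elim (hbig j) (hDs b (mem_singleton_self b) j)
    · rw [inter_comm]; exact hmeet b (mem_singleton_self b)
  · exact sum_dualWeight_cell_le_of_two_le_card hv hτ hC hD hmeet hbig hDs htwo

end DualWeight

theorem santa_claus_dual_negativity_claim_general
    {P R : Type*} [Fintype R] [DecidableEq P] [DecidableEq R]
    (v : R → ℝ) (hv : ∀ j, 0 < v j) (Rof : P → Finset R)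
    (τ : ℝ) (hτ : 0 < τ)
    (M A : Finset (P × Finset R))
    -- `M ⊆ H` : every edge of `M` is a hyperedge
    (hM_edge : ∀ e ∈ M, e.2 ⊆ Rof e.1 ∧
      τ / (23 / 6) ≤ ∑ j ∈ e.2, v j ∧
      ∀ C' ⊂ e.2, ∑ j ∈ C', v j < τ / (23 / 6))
    -- `M` is a matching
    (hM_match : ∀ e₁ ∈ M, ∀ e₂ ∈ M, e₁ ≠ e₂ →
      e₁.1 ≠ e₂.1 ∧ Disjoint e₁.2 e₂.2)
    -- `A ⊆ H \ M`
    (hA_edge : ∀ e ∈ A, (e.2 ⊆ Rof e.1 ∧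
      τ / (23 / 6) ≤ ∑ j ∈ e.2, v j ∧
      ∀ C' ⊂ e.2, ∑ j ∈ C', v j < τ / (23 / 6)) ∧ e ∉ M)
    -- every `e ∈ A` is blocked: `B(e) ≠ ∅`
    (hblocked : ∀ e ∈ A, ∃ e' ∈ M, (e'.2 ∩ e.2).Nonempty)
    -- every edge of `M` meets the resources of at most one edge of `A`
    (hone : ∀ e' ∈ M, ∀ e₁ ∈ A, ∀ e₂ ∈ A,
      (e'.2 ∩ e₁.2).Nonempty → (e'.2 ∩ e₂.2).Nonempty → e₁ = e₂)
    (z : R → ℝ)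
    (hz : ∀ j, z j =
      if j ∈ A.biUnion Prod.snd ∪
          (M.filter (fun e' => ∃ e ∈ A, (e'.2 ∩ e.2).Nonempty)).biUnion Prod.snd
      then (if τ / (23 / 6) ≤ v j then 1
            else min (1 / 3) ((23 / 15) * v j / τ))
      else 0) :
    ∑ j, z j ≤ ((M.filter (fun e' => ∃ e ∈ A, (e'.2 ∩ e.2).Nonempty)).card : ℝ) ∧
    ∑ j, z j <
      (((M.filter (fun e' => ∃ e ∈ A, (e'.2 ∩ e.2).Nonempty)).image
        Prod.fst).card : ℝ) + 1 := by
  set B := M.filter fun e' => ∃ e ∈ A, (e'.2 ∩ e.2).Nonempty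
  set blockers : P × Finset R → Finset (P × Finset R) :=
    fun e => M.filter fun e' => (e'.2 ∩ e.2).Nonempty
  have hB : A.biUnion blockers = B := by
    ext e'
    simp only [blockers, B, mem_biUnion, mem_filter]
    tauto
  have hsupport : A.biUnion Prod.snd ∪ B.biUnion Prod.snd =
      A.biUnion fun e => e.2 ∪ (blockers e).biUnion Prod.snd := by
    rw [← hB, biUnion_biUnion, biUnion_union]
  have hsum : ∑ j, z j = ∑ j ∈ A.biUnion Prod.snd ∪ B.biUnion Prod.snd, dualWeight v τ j := by
    simp_rw [hz]
    exact (sum_ite_mem univ _ (dualWeight v τ)).trans (by rw [univ_inter])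
  have hdisj : (A : Set (P × Finset R)).PairwiseDisjoint blockers :=
    fun e₁ he₁ e₂ he₂ hne => disjoint_left.mpr fun e' h₁ h₂ =>
      hne (hone e' (mem_filter.mp h₁).1 e₁ he₁ e₂ he₂ (mem_filter.mp h₁).2 (mem_filter.mp h₂).2)
  have hle : ∑ j, z j ≤ #B := by
    rw [hsum, hsupport, ← hB]
    refine sum_biUnion_le_card_biUnion (dualWeight_nonneg (fun j => (hv j).le) hτ.le) hdisj
      fun e he => sum_dualWeight_cell_le (fun j => (hv j).le) hτ (hA_edge e he).1.2.2 ?_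
        (fun b hb => (hM_edge b (mem_filter.mp hb).1).2.2) (fun b hb => (mem_filter.mp hb).2)
    obtain ⟨e', he', hmeet⟩ := hblocked e he
    exact ⟨e', mem_filter.mpr ⟨he', hmeet⟩⟩
  have hplayers : #(B.image Prod.fst) = #B := card_image_of_injOn fun e₁ he₁ e₂ he₂ h =>
    by_contra fun hne => (hM_match e₁ (mem_filter.mp he₁).1 e₂ (mem_filter.mp he₂).1 hne).1 h
  refine ⟨hle, ?_⟩
  rw [hplayers]
  linarith

/-- Let `β = 23/15`, `α = 23/6`, `t = τ/α`.  Hyperedges are pairs `(i, C)` with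
`C ⊆ Rof i` minimal for threshold `t`.  Let `M` be a matching and `A` a set
of addable edges (edges not in `M`) with pairwise disjoint resource sets,
such that every `e ∈ A` is blocked and every edge of `M` meets the resource
set of at most one edge of `A`.  With `B = {e' ∈ M : ∃ e ∈ A, e'.2 ∩ e.2 ≠ ∅}`
the set of blocking edges, define `z j = 1` if `j ∈ A_R ∪ B_R` and `v j ≥ t`;
`z j = min (1/3) (β * v j / τ)` if `j ∈ A_R ∪ B_R` and `v j < t`; and
`z j = 0` otherwise.  Then `∑ j, z j ≤ |B|`; in particular
`∑ j, z j < |B_P| + 1`. -/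
theorem santa_claus_dual_negativity_claim
    {P R : Type*} [Fintype P] [Fintype R] [DecidableEq P] [DecidableEq R]
    (v : R → ℝ) (hv : ∀ j, 0 < v j) (Rof : P → Finset R)
    (τ : ℝ) (hτ : 0 < τ)
    (M A : Finset (P × Finset R))
    -- `M ⊆ H` : every edge of `M` is a hyperedge
    (hM_edge : ∀ e ∈ M, e.2 ⊆ Rof e.1 ∧
      τ / (23 / 6) ≤ ∑ j ∈ e.2, v j ∧
      ∀ C' ⊂ e.2, ∑ j ∈ C', v j < τ / (23 / 6))
    -- `M` is a matching
    (hM_match : ∀ e₁ ∈ M, ∀ e₂ ∈ M, e₁ ≠ e₂ →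
      e₁.1 ≠ e₂.1 ∧ Disjoint e₁.2 e₂.2)
    -- `A ⊆ H \ M`
    (hA_edge : ∀ e ∈ A, (e.2 ⊆ Rof e.1 ∧
      τ / (23 / 6) ≤ ∑ j ∈ e.2, v j ∧
      ∀ C' ⊂ e.2, ∑ j ∈ C', v j < τ / (23 / 6)) ∧ e ∉ M)
    -- the resource sets of the edges of `A` are pairwise disjoint
    (hA_disj : ∀ e₁ ∈ A, ∀ e₂ ∈ A, e₁ ≠ e₂ → Disjoint e₁.2 e₂.2)
    -- every `e ∈ A` is blocked: `B(e) ≠ ∅`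
    (hblocked : ∀ e ∈ A, ∃ e' ∈ M, (e'.2 ∩ e.2).Nonempty)
    -- every edge of `M` meets the resources of at most one edge of `A`
    (hone : ∀ e' ∈ M, ∀ e₁ ∈ A, ∀ e₂ ∈ A,
      (e'.2 ∩ e₁.2).Nonempty → (e'.2 ∩ e₂.2).Nonempty → e₁ = e₂)
    (z : R → ℝ)
    (hz : ∀ j, z j =
      if j ∈ A.biUnion Prod.snd ∪
          (M.filter (fun e' => ∃ e ∈ A, (e'.2 ∩ e.2).Nonempty)).biUnion Prod.snd
      then (if τ / (23 / 6) ≤ v j then 1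
            else min (1 / 3) ((23 / 15) * v j / τ))
      else 0) :
    ∑ j, z j ≤ ((M.filter (fun e' => ∃ e ∈ A, (e'.2 ∩ e.2).Nonempty)).card : ℝ) ∧
    ∑ j, z j <
      (((M.filter (fun e' => ∃ e ∈ A, (e'.2 ∩ e.2).Nonempty)).image
        Prod.fst).card : ℝ) + 1 :=
  santa_claus_dual_negativity_claim_general v hv Rof τ hτ M A hM_edge hM_match hA_edge hblocked hone
    z hz
end
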